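/- arXiv:1207.2628 — 8 statements merged into one kernel-verified Lean document; each statement's English description precedes it below -/
import Mathlib

section
/- Let d ≥ 2 be an integer and p a prime with d/2 < p < d. Let α ∈ K satisfy α^{d−1} = d^d / ((−p)^p (d−p)^{d−p}) and set f(z) = z^{d−p} (z − α)^p. Then f ∈ P_d, f is post-critically bounded (indeed every critical point of f has finite forward orbit), and α is a critical point of f with |α| = p^{p/(d−1)}. -/
/-!
With `γ = (d - p) α / d`, the derivative of `f = z^(d-p) (z - α)^p` is
`z^(d-p-1) (z - α)^(p-1) · d (z - γ)`, so the critical points are `0`, `α` and `γ`.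
The relation defining `α` is exactly `f γ = α`, so `{0, α, γ}` is forward invariant and
every critical orbit is finite. Since `d/2 < p < d`, both `d` and `d - p` are `p`-adic units,
so `|α|^(d-1) = |p|^(-p)`.
-/

open Polynomial

theorem Set.MapsTo.finite_range_iterate {β : Type*} {g : β → β} {S : Set β} (hS : S.Finite)
    (hg : Set.MapsTo g S S) {x : β} (hx : x ∈ S) : (Set.range fun n => g^[n] x).Finite :=
  hS.subset (Set.range_subset_iff.2 fun n => hg.iterate n hx)

theorem Set.Finite.exists_norm_le_of_range {ι E : Type*} [SeminormedAddGroup E] {u : ι → E}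
    (hu : (Set.range u).Finite) : ∃ B : ℝ, ∀ i, ‖u i‖ ≤ B := by
  obtain ⟨B, hB⟩ := hu.isBounded.exists_norm_le
  exact ⟨B, fun i => hB _ ⟨i, rfl⟩⟩

theorem Real.eq_rpow_div_of_pow_eq {x a : ℝ} {m n : ℕ} (hx : 0 ≤ x) (ha : 0 ≤ a)
    (hn : n ≠ 0) (h : x ^ n = a ^ m) : x = a ^ ((m : ℝ) / n) := by
  rw [← Real.pow_rpow_inv_natCast hx hn, h, ← Real.rpow_natCast, ← Real.rpow_mul ha,
    div_eq_mul_inv]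

section CommRing

variable {R : Type*} [CommRing R]

theorem monic_X_pow_mul_X_sub_C_pow (m n : ℕ) (a : R) : (X ^ m * (X - C a) ^ n).Monic :=
  (monic_X_pow m).mul ((monic_X_sub_C a).pow n)

theorem natDegree_X_pow_mul_X_sub_C_pow [Nontrivial R] (m n : ℕ) (a : R) :
    (X ^ m * (X - C a) ^ n).natDegree = m + n := by
  rw [(monic_X_pow m).natDegree_mul ((monic_X_sub_C a).pow n), natDegree_X_pow,
    (monic_X_sub_C a).natDegree_pow, natDegree_X_sub_C, mul_one]

theorem eval_derivative_X_pow_sub_mul_X_sub_C_pow {p d : ℕ} (hp : 0 < p) (hpd : p < d) (a c : R) :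
    (derivative (X ^ (d - p) * (X - C a) ^ p)).eval c =
      c ^ (d - p - 1) * (c - a) ^ (p - 1) * ((d : R) * c - ((d : R) - p) * a) := by
  have hc : c ^ (d - p) = c ^ (d - p - 1) * c := by rw [← pow_succ]; congr 1; omega
  have hca : (c - a) ^ p = (c - a) ^ (p - 1) * (c - a) := by rw [← pow_succ]; congr 1; omega
  simp only [derivative_mul, derivative_pow, derivative_X, derivative_sub, derivative_C,
    sub_zero, mul_one, eval_add, eval_mul, eval_pow, eval_sub, eval_C, eval_X]
  rw [hc, hca, Nat.cast_sub hpd.le]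
  ring

end CommRing

section Field

variable {K : Type*} [Field K] {p d : ℕ} {α : K}

theorem eq_zero_or_eq_or_eq_of_eval_derivative_eq_zero (hp : 0 < p) (hpd : p < d)
    (hd : (d : K) ≠ 0) {c : K} (hc : (derivative (X ^ (d - p) * (X - C α) ^ p)).eval c = 0) :
    c = 0 ∨ c = α ∨ c = ((d : K) - p) * α / d := by
  rw [eval_derivative_X_pow_sub_mul_X_sub_C_pow hp hpd] at hc
  rcases mul_eq_zero.1 hc with hc | hc
  · rcases mul_eq_zero.1 hc with hc | hc
    · exact .inl (pow_eq_zero_iff'.1 hc).1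
    · exact .inr (.inl (sub_eq_zero.1 (pow_eq_zero_iff'.1 hc).1))
  · exact .inr (.inr (by rw [eq_div_iff hd]; linear_combination hc))

theorem eval_X_pow_sub_mul_X_sub_C_pow_critical (hpd : p < d) (hd : (d : K) ≠ 0)
    (hα : α ^ (d - 1) * ((-(p : K)) ^ p * ((d : K) - p) ^ (d - p)) = (d : K) ^ d) :
    (X ^ (d - p) * (X - C α) ^ p).eval (((d : K) - p) * α / d) = α := by
  have hsub : ((d : K) - p) * α / d - α = -(p : K) * α / d := by field_simp; ring
  have hαd : α ^ (d - p) * α ^ p = α * α ^ (d - 1) := by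
    rw [← pow_add, ← pow_succ']; congr 1; omega
  have hdeg : (d - p) + p = d := by omega
  simp only [eval_mul, eval_pow, eval_sub, eval_X, eval_C]
  rw [hsub, div_pow, div_pow, div_mul_div_comm, ← pow_add, hdeg, div_eq_iff (pow_ne_zero _ hd),
    ← hα, mul_pow, mul_pow]
  linear_combination ((d : K) - p) ^ (d - p) * (-(p : K)) ^ p * hαd

theorem mapsTo_eval_X_pow_sub_mul_X_sub_C_pow (hp : 0 < p) (hpd : p < d) (hd : (d : K) ≠ 0)
    (hα : α ^ (d - 1) * ((-(p : K)) ^ p * ((d : K) - p) ^ (d - p)) = (d : K) ^ d) :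
    Set.MapsTo (fun z => (X ^ (d - p) * (X - C α) ^ p).eval z)
      {0, α, ((d : K) - p) * α / d} {0, α, ((d : K) - p) * α / d} := by
  rintro z (rfl | rfl | rfl)
  · left; simp [zero_pow (by omega : d - p ≠ 0)]
  · left; simp [zero_pow hp.ne']
  · right; left; exact eval_X_pow_sub_mul_X_sub_C_pow_critical hpd hd hα

end Field

section PAdicNorm

variable {K : Type*} [NormedField K] {p : ℕ} [Fact p.Prime]

theorem norm_natCast_eq_one_of_not_dvd (hext : ∀ q : ℚ, ‖(q : K)‖ = (padicNorm p q : ℝ))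
    {n : ℕ} (hn : ¬ p ∣ n) : ‖(n : K)‖ = 1 := by
  simpa [(padicNorm.nat_eq_one_iff n).2 hn] using hext n

theorem norm_natCast_self_eq_inv (hext : ∀ q : ℚ, ‖(q : K)‖ = (padicNorm p q : ℝ)) :
    ‖(p : K)‖ = (p : ℝ)⁻¹ := by
  simpa [padicNorm.padicNorm_p (Fact.out : p.Prime).one_lt] using hext p

end PAdicNorm

theorem stmt_1_general (K : Type*) [NormedField K]
    (p : ℕ) (hp : p.Prime)
    (hext : ∀ q : ℚ, ‖(q : K)‖ = (padicNorm p q : ℝ))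
    (d : ℕ) (hdp : d < 2 * p) (hpd : p < d)
    (α : K)
    (hα : α ^ (d - 1) = (d : K) ^ d / ((-(p : K)) ^ p * ((d : K) - (p : K)) ^ (d - p)))
    (f : K[X]) (hf : f = X ^ (d - p) * (X - C α) ^ p) :
    (f.Monic ∧ f.natDegree = d ∧ f.eval 0 = 0) ∧
    (∀ c : K, f.derivative.eval c = 0 →
      (Set.range fun n : ℕ => (fun z => f.eval z)^[n] c).Finite) ∧
    (∀ c : K, f.derivative.eval c = 0 →
      ∃ B : ℝ, ∀ n : ℕ, ‖(fun z => f.eval z)^[n] c‖ ≤ B) ∧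
    f.derivative.eval α = 0 ∧
    ‖α‖ = (p : ℝ) ^ ((p : ℝ) / ((d : ℝ) - 1)) := by
  have : Fact p.Prime := ⟨hp⟩
  have hp0 : 0 < p := hp.pos
  have hnd : ‖(d : K)‖ = 1 := norm_natCast_eq_one_of_not_dvd hext
    (Nat.not_dvd_of_lt_of_lt_mul_succ (k := 1) (by omega) (by omega))
  have hndp : ‖(d : K) - p‖ = 1 := by
    rw [← Nat.cast_sub hpd.le]
    exact norm_natCast_eq_one_of_not_dvd hext (Nat.not_dvd_of_pos_of_lt (by omega) (by omega))
  have hnp := norm_natCast_self_eq_inv hext (K := K)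
  have hd : (d : K) ≠ 0 := norm_ne_zero_iff.1 (by simp [hnd])
  have hden : (-(p : K)) ^ p * ((d : K) - p) ^ (d - p) ≠ 0 :=
    norm_ne_zero_iff.1 (by simp [hndp, hnp, hp0.ne'])
  subst hf
  have horbit : ∀ c : K, _ → (Set.range fun n : ℕ => _^[n] c).Finite := fun c hc =>
    Set.MapsTo.finite_range_iterate (Set.toFinite _)
      (mapsTo_eval_X_pow_sub_mul_X_sub_C_pow hp0 hpd hd ((eq_div_iff hden).1 hα))
      (eq_zero_or_eq_or_eq_of_eval_derivative_eq_zero hp0 hpd hd hc)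
  have hnα : ‖α‖ ^ (d - 1) = (p : ℝ) ^ p := by
    rw [← norm_pow, hα]
    simp [hnd, hndp, hnp]
  refine ⟨⟨?_, ?_, ?_⟩, horbit, fun c hc => (horbit c hc).exists_norm_le_of_range, ?_, ?_⟩
  · exact monic_X_pow_mul_X_sub_C_pow _ _ _
  · rw [natDegree_X_pow_mul_X_sub_C_pow]; omega
  · simp [zero_pow (by omega : d - p ≠ 0)]
  · rw [eval_derivative_X_pow_sub_mul_X_sub_C_pow hp0 hpd, sub_self,
      zero_pow (by omega : p - 1 ≠ 0)]
    ring
  · rw [Real.eq_rpow_div_of_pow_eq (norm_nonneg α) (Nat.cast_nonneg p) (by omega) hnα,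
      Nat.cast_sub (by omega), Nat.cast_one]

/-- Let `d ≥ 2` and `p` prime with `d/2 < p < d`. Let
`α^(d-1) = d^d / ((-p)^p (d-p)^(d-p))` and `f(z) = z^(d-p) (z-α)^p`. Then
`f ∈ P_d`, `f` is PCB (indeed every critical point has finite forward orbit),
and `α` is a critical point of `f` with `|α| = p^(p/(d-1))`. -/
theorem stmt_1 (K : Type*) [NormedField K] [IsAlgClosed K] [CompleteSpace K]
    (hna : IsNonarchimedean (fun x : K => ‖x‖))
    (p : ℕ) (hp : p.Prime)
    (hext : ∀ q : ℚ, ‖(q : K)‖ = (padicNorm p q : ℝ))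
    (d : ℕ) (hd : 2 ≤ d) (hdp : d < 2 * p) (hpd : p < d)
    (α : K)
    (hα : α ^ (d - 1) = (d : K) ^ d / ((-(p : K)) ^ p * ((d : K) - (p : K)) ^ (d - p)))
    (f : K[X]) (hf : f = X ^ (d - p) * (X - C α) ^ p) :
    (f.Monic ∧ f.natDegree = d ∧ f.eval 0 = 0) ∧
    (∀ c : K, f.derivative.eval c = 0 →
      (Set.range fun n : ℕ => (fun z => f.eval z)^[n] c).Finite) ∧
    (∀ c : K, f.derivative.eval c = 0 →
      ∃ B : ℝ, ∀ n : ℕ, ‖(fun z => f.eval z)^[n] c‖ ≤ B) ∧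
    f.derivative.eval α = 0 ∧
    ‖α‖ = (p : ℝ) ^ ((p : ℝ) / ((d : ℝ) - 1)) :=
  stmt_1_general K p hp hext d hdp hpd α hα f hf
end

section
/- Let d ≥ 2 be an integer and p a prime with p > d. A polynomial f ∈ P_d is post-critically bounded if and only if every critical point c of f satisfies |c| ≤ 1. -/
/-!
Since `p > d`, every integer `1 ≤ n ≤ d` has absolute value `1`, so from `f' = d ∏ (z - c)` the
coefficients of `f` satisfy `|aₖ| ≤ R ^ (d - k)` as soon as all critical points lie in the disc of
radius `R`. For `R = 1` this makes `f` map the closed unit disc into itself, which gives one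
direction.

Conversely, let `γ` be a critical point of maximal absolute value `R` and suppose `R > 1`. The
coefficient bound gives `|f z| = |z| ^ d` for `|z| > R`, so bounded critical orbits never leave
the disc of radius `R`. The polynomial `g w = γ⁻ᵈ f (γ w)` then has integral coefficients,
integral critical points and critical values in the open unit disc. Its reduction `G` to the
residue field, where `1, …, d` stay nonzero, vanishes at `0` and at every critical point; a
critical point of multiplicity `m` is then a root of multiplicity `m + 1`, and counting roots of
`G` shows that `0` is its only critical point, contradicting that `1 = γ / γ` is one.
-/

open Polynomial IsLocalRing

namespace Polynomial

variable {R : Type*}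

theorem coeff_derivative_natDegree_sub_one [Semiring R] (p : R[X]) :
    p.derivative.coeff (p.natDegree - 1) = p.leadingCoeff * p.natDegree := by
  rcases Nat.eq_zero_or_pos p.natDegree with h | h
  · simp [h, coeff_derivative, coeff_eq_zero_of_natDegree_lt]
  · rw [coeff_derivative, ← Nat.cast_add_one, Nat.sub_add_cancel h, leadingCoeff]

theorem natDegree_derivative_of_natCast_ne_zero [Semiring R] [NoZeroDivisors R] {p : R[X]}
    (hp : (p.natDegree : R) ≠ 0) : p.derivative.natDegree = p.natDegree - 1 := by
  refine natDegree_eq_of_le_of_coeff_ne_zero (natDegree_derivative_le p) ?_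
  rw [coeff_derivative_natDegree_sub_one]
  exact mul_ne_zero (leadingCoeff_ne_zero.mpr (by rintro rfl; simp at hp)) hp

theorem leadingCoeff_derivative_of_natCast_ne_zero [Semiring R] [NoZeroDivisors R] {p : R[X]}
    (hp : (p.natDegree : R) ≠ 0) : p.derivative.leadingCoeff = p.leadingCoeff * p.natDegree := by
  rw [leadingCoeff, natDegree_derivative_of_natCast_ne_zero hp, coeff_derivative_natDegree_sub_one]

theorem derivative_ne_zero_of_natCast_ne_zero [Semiring R] [NoZeroDivisors R] {p : R[X]}
    (hp : (p.natDegree : R) ≠ 0) : p.derivative ≠ 0 := fun h => by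
  have := coeff_derivative_natDegree_sub_one p
  rw [h, coeff_zero, eq_comm, mul_eq_zero, leadingCoeff_eq_zero] at this
  exact this.elim (by rintro rfl; simp at hp) hp

theorem Monic.derivative_eq_C_mul_prod_roots [CommRing R] [IsDomain R] {f : R[X]} (hf : f.Monic)
    (hd : (f.natDegree : R) ≠ 0) (hsplit : f.derivative.Splits) :
    f.derivative = C (f.natDegree : R) * (f.derivative.roots.map (X - C ·)).prod := by
  conv_lhs => rw [hsplit.eq_prod_roots, leadingCoeff_derivative_of_natCast_ne_zero hd,
    hf.leadingCoeff, one_mul]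

theorem derivative_scaleRoots [CommSemiring R] {p : R[X]}
    (hp : p.derivative.natDegree = p.natDegree - 1) (s : R) :
    (p.scaleRoots s).derivative = p.derivative.scaleRoots s := by
  ext i
  rw [coeff_derivative, coeff_scaleRoots, coeff_scaleRoots, coeff_derivative, hp,
    show p.natDegree - (i + 1) = p.natDegree - 1 - i by omega]
  ring

theorem eq_zero_of_mem_roots_derivative {k : Type*} [Field k] {G : k[X]}
    (hchar : ∀ n : ℕ, 0 < n → n ≤ G.natDegree → (n : k) ≠ 0) (hsplit : G.derivative.Splits)
    (h0 : G.IsRoot 0) (hcrit : ∀ b ∈ G.derivative.roots, G.IsRoot b)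
    {a : k} (ha : a ∈ G.derivative.roots) : a = 0 := by
  classical
  have hG : G ≠ 0 := by rintro rfl; simp at ha
  have hd : 0 < G.natDegree := by
    by_contra! h
    rw [derivative_of_natDegree_zero (by omega)] at ha
    simp at ha
  set S := insert 0 G.derivative.roots.toFinset
  have hroot : ∀ b ∈ S, G.IsRoot b := by
    simpa only [S, Finset.forall_mem_insert, Multiset.mem_toFinset] using ⟨h0, hcrit⟩
  have hmult : ∀ b ∈ S, G.roots.count b = G.derivative.roots.count b + 1 := by
    intro b hb
    have hpos := (rootMultiplicity_pos hG).mpr (hroot b hb)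
    have hle : G.rootMultiplicity b ≤ G.natDegree :=
      (count_roots G ▸ Multiset.count_le_card _ _).trans (card_roots' G)
    rw [count_roots, count_roots, derivative_rootMultiplicity_of_root_of_mem_nonZeroDivisors
      (hroot b hb) (mem_nonZeroDivisors_of_ne_zero (hchar _ hpos hle))]
    omega
  have hcard : G.derivative.roots.card = G.natDegree - 1 := by
    rw [← hsplit.natDegree_eq_card_roots,
      natDegree_derivative_of_natCast_ne_zero (hchar _ hd le_rfl)]
  have hS : G.natDegree - 1 + S.card ≤ G.natDegree := calc
    G.natDegree - 1 + S.card = ∑ b ∈ S, (G.derivative.roots.count b + 1) := by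
      rw [Finset.sum_add_distrib, Multiset.sum_count_eq_card
        fun b hb => Finset.mem_insert_of_mem (Multiset.mem_toFinset.mpr hb), hcard,
        Finset.card_eq_sum_ones]
    _ = ∑ b ∈ S, G.roots.count b := Finset.sum_congr rfl fun b hb => (hmult b hb).symm
    _ ≤ ∑ b ∈ S ∪ G.roots.toFinset, G.roots.count b :=
      Finset.sum_le_sum_of_subset Finset.subset_union_left
    _ = G.roots.card := Multiset.sum_count_eq_card
      fun b hb => Finset.mem_union_right _ (Multiset.mem_toFinset.mpr hb)
    _ ≤ G.natDegree := card_roots' G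
  have hS1 : S.card ≤ 1 := by omega
  exact Finset.card_le_one.mp hS1 a (Finset.mem_insert_of_mem (Multiset.mem_toFinset.mpr ha)) 0
    (Finset.mem_insert_self _ _)

theorem mem_maximalIdeal_of_derivative_eq_prod {O : Type*} [CommRing O] [IsLocalRing O]
    {q : O[X]} (hq : q.Monic) (hunit : ∀ n : ℕ, 0 < n → n ≤ q.natDegree → IsUnit (n : O))
    {t : Multiset O} (hder : q.derivative = C (q.natDegree : O) * (t.map (X - C ·)).prod)
    (h0 : q.coeff 0 ∈ maximalIdeal O) (hval : ∀ a ∈ t, q.eval a ∈ maximalIdeal O)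
    {a : O} (ha : a ∈ t) : a ∈ maximalIdeal O := by
  set G := q.map (residue O)
  have hdeg : G.natDegree = q.natDegree := hq.natDegree_map _
  have hchar : ∀ n : ℕ, 0 < n → n ≤ G.natDegree → (n : ResidueField O) ≠ 0 := fun n hn hnd => by
    rw [← map_natCast (residue O), residue_ne_zero_iff_isUnit]
    exact hunit n hn (hdeg ▸ hnd)
  have hpos : 0 < q.natDegree := by
    by_contra! h
    rw [hq.natDegree_eq_zero.mp (by omega), coeff_one_zero] at h0
    exact (maximalIdeal.isMaximal O).ne_top ((Ideal.eq_top_iff_one _).mpr h0)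
  have hG' : G.derivative =
      C (q.natDegree : ResidueField O) * ((t.map (residue O)).map (X - C ·)).prod := by
    rw [derivative_map, hder, Polynomial.map_mul, map_C, map_natCast, Polynomial.map_multiset_prod,
      Multiset.map_map, Multiset.map_map]
    simp
  have hroots : G.derivative.roots = t.map (residue O) := by
    rw [hG', roots_C_mul _ (hchar _ hpos hdeg.ge), roots_multiset_prod_X_sub_C]
  have hsplit : G.derivative.Splits := by
    rw [splits_iff_card_roots, hroots, hG', natDegree_C_mul (hchar _ hpos hdeg.ge),
      natDegree_multiset_prod_X_sub_C_eq_card, Multiset.card_map]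
  rw [← residue_eq_zero_iff]
  refine eq_zero_of_mem_roots_derivative hchar hsplit ?_ ?_ (hroots ▸ Multiset.mem_map_of_mem _ ha)
  · rw [IsRoot, ← coeff_zero_eq_eval_zero, coeff_map, residue_eq_zero_iff]
    exact h0
  · rw [hroots]
    intro b hb
    obtain ⟨b, hbt, rfl⟩ := Multiset.mem_map.mp hb
    rw [IsRoot, eval_map, eval₂_at_apply, residue_eq_zero_iff]
    exact hval b hbt

end Polynomial

theorem norm_iterate_le_of_bounded_orbit {E : Type*} [Norm E] {F : E → E} {R : ℝ} (hR : 1 ≤ R)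
    (hF : ∀ z, R < ‖z‖ → ‖z‖ ^ 2 ≤ ‖F z‖) {x : E} (hx : ∃ B, ∀ n, ‖F^[n] x‖ ≤ B) (n : ℕ) :
    ‖F^[n] x‖ ≤ R := by
  obtain ⟨B, hB⟩ := hx
  by_contra! hn
  set w := F^[n] x
  have hw : 1 < ‖w‖ := hR.trans_lt hn
  have hgrow : ∀ m, ‖w‖ ^ (m + 1) ≤ ‖F^[m] w‖ := by
    intro m
    induction m with
    | zero => simp
    | succ m ih =>
      have hwm : ‖w‖ ≤ ‖F^[m] w‖ := (le_self_pow₀ hw.le (by omega)).trans ih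
      rw [Function.iterate_succ_apply']
      have hw0 : 0 ≤ ‖w‖ := zero_le_one.trans hw.le
      calc ‖w‖ ^ (m + 1 + 1) = ‖w‖ ^ (m + 1) * ‖w‖ := pow_succ _ _
        _ ≤ ‖F^[m] w‖ * ‖F^[m] w‖ := mul_le_mul ih hwm hw0 (hw0.trans hwm)
        _ = ‖F^[m] w‖ ^ 2 := (sq _).symm
        _ ≤ ‖F (F^[m] w)‖ := hF _ (hn.trans_le hwm)
  obtain ⟨m, hm⟩ := pow_unbounded_of_one_lt B hw
  have hBm : ‖F^[m] w‖ ≤ B := Function.iterate_add_apply F m n x ▸ hB (m + n)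
  linarith [hgrow m, pow_le_pow_right₀ hw.le (Nat.le_add_right m 1)]

theorem Multiset.norm_esymm_le {K : Type*} [NormedField K] [IsUltrametricDist K] {s : Multiset K}
    {R : ℝ} (hR : 0 ≤ R) (hs : ∀ x ∈ s, ‖x‖ ≤ R) (n : ℕ) : ‖s.esymm n‖ ≤ R ^ n := by
  rcases eq_or_ne (s.powersetCard n) 0 with h | h
  · simp [Multiset.esymm, h, pow_nonneg hR]
  obtain ⟨t, ht, hle⟩ :=
    IsUltrametricDist.exists_norm_multiset_sum_le (s.powersetCard n) (f := Multiset.prod)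
  obtain ⟨hts, rfl⟩ := Multiset.mem_powersetCard.mp (ht h)
  calc ‖s.esymm (Multiset.card t)‖ ≤ ‖t.prod‖ := hle
    _ = (t.map normHom).prod := map_multiset_prod normHom t
    _ ≤ R ^ Multiset.card t := Multiset.prod_map_le_pow_card (fun x _ => norm_nonneg x)
      fun x hx => hs x (Multiset.mem_of_le hts hx)

namespace Polynomial

variable {K : Type*} [NormedField K] [IsUltrametricDist K]

theorem norm_coeff_prod_X_sub_C_le {s : Multiset K} {R : ℝ} (hR : 0 ≤ R)
    (hs : ∀ x ∈ s, ‖x‖ ≤ R) (j : ℕ) :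
    ‖(s.map (X - C ·)).prod.coeff j‖ ≤ R ^ (Multiset.card s - j) := by
  rcases le_or_gt j (Multiset.card s) with hj | hj
  · rw [Multiset.prod_X_sub_C_coeff s hj, norm_mul, norm_pow, norm_neg, norm_one, one_pow, one_mul]
    exact s.norm_esymm_le hR hs _
  · rw [coeff_eq_zero_of_natDegree_lt (by rwa [natDegree_multiset_prod_X_sub_C_eq_card]),
      norm_zero]
    exact pow_nonneg hR _

theorem norm_coeff_le_of_norm_critical_le {f : K[X]} (hf : f.Monic)
    (hunit : ∀ n : ℕ, 0 < n → n ≤ f.natDegree → ‖(n : K)‖ = 1) (hsplit : f.derivative.Splits)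
    (h0 : f.eval 0 = 0) {R : ℝ} (hR : 0 ≤ R) (hcrit : ∀ c, f.derivative.IsRoot c → ‖c‖ ≤ R)
    (k : ℕ) : ‖f.coeff k‖ ≤ R ^ (f.natDegree - k) := by
  rcases k with _ | k
  · rw [coeff_zero_eq_eval_zero, h0, norm_zero]
    exact pow_nonneg hR _
  rcases le_or_gt (k + 1) f.natDegree with hk | hk
  · have hd : ‖(f.natDegree : K)‖ = 1 := hunit _ (by omega) le_rfl
    have hd0 : (f.natDegree : K) ≠ 0 := norm_ne_zero_iff.mp (by rw [hd]; exact one_ne_zero)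
    calc ‖f.coeff (k + 1)‖ = ‖f.derivative.coeff k‖ := by
          rw [coeff_derivative, norm_mul, ← Nat.cast_add_one, hunit _ k.succ_pos hk, mul_one]
      _ = ‖(f.derivative.roots.map (X - C ·)).prod.coeff k‖ := by
          conv_lhs => rw [hf.derivative_eq_C_mul_prod_roots hd0 hsplit]
          rw [coeff_C_mul, norm_mul, hd, one_mul]
      _ ≤ R ^ (Multiset.card f.derivative.roots - k) :=
          norm_coeff_prod_X_sub_C_le hR (fun c hc => hcrit c (isRoot_of_mem_roots hc)) k
      _ = R ^ (f.natDegree - (k + 1)) := by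
          rw [← hsplit.natDegree_eq_card_roots, natDegree_derivative_of_natCast_ne_zero hd0]
          congr 1
          omega
  · rw [coeff_eq_zero_of_natDegree_lt hk, norm_zero]
    exact pow_nonneg hR _

theorem norm_eval_eq_of_norm_coeff_le {f : K[X]} (hf : f.Monic) {R : ℝ} (hR : 0 ≤ R)
    (hcoeff : ∀ k < f.natDegree, ‖f.coeff k‖ ≤ R ^ (f.natDegree - k)) {z : K} (hz : R < ‖z‖) :
    ‖f.eval z‖ = ‖z‖ ^ f.natDegree := by
  have hlow : ‖∑ k ∈ Finset.range f.natDegree, f.coeff k * z ^ k‖ < ‖z ^ f.natDegree‖ := by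
    rcases (Finset.range f.natDegree).eq_empty_or_nonempty with h | h
    · rw [h, Finset.sum_empty, norm_zero, norm_pow]
      exact pow_pos (hR.trans_lt hz) _
    obtain ⟨k, hk, hle⟩ := IsUltrametricDist.exists_norm_finsetSum_le_of_nonempty h
      (fun k => f.coeff k * z ^ k)
    have hk : k < f.natDegree := Finset.mem_range.mp hk
    calc _ ≤ ‖f.coeff k * z ^ k‖ := hle
      _ ≤ R ^ (f.natDegree - k) * ‖z‖ ^ k := by
        rw [norm_mul, norm_pow]
        gcongr
        exact hcoeff k hk
      _ < ‖z‖ ^ (f.natDegree - k) * ‖z‖ ^ k := by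
        gcongr
        · exact pow_pos (hR.trans_lt hz) _
        · omega
      _ = ‖z ^ f.natDegree‖ := by rw [← pow_add, norm_pow, Nat.sub_add_cancel hk.le]
  have hsum : (∑ k ∈ Finset.range f.natDegree, C (f.coeff k) * X ^ k).eval z =
      ∑ k ∈ Finset.range f.natDegree, f.coeff k * z ^ k := by
    simp [eval_finsetSum]
  conv_lhs => rw [hf.as_sum]
  rw [eval_add, hsum, eval_pow, eval_X, add_comm,
    IsUltrametricDist.norm_add_eq_max_of_norm_ne_norm hlow.ne, max_eq_right hlow.le, norm_pow]

theorem norm_eval_le_one {f : K[X]} (hf : ∀ k, ‖f.coeff k‖ ≤ 1) {z : K} (hz : ‖z‖ ≤ 1) :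
    ‖f.eval z‖ ≤ 1 := by
  rw [eval_eq_sum_range]
  refine IsUltrametricDist.norm_sum_le_of_forall_le_of_nonneg zero_le_one fun k _ => ?_
  rw [norm_mul, norm_pow]
  exact mul_le_one₀ (hf k) (by positivity) (pow_le_one₀ (norm_nonneg z) hz)

theorem norm_critical_lt_one_of_norm_critical_value_lt_one {g : K[X]} (hg : g.Monic)
    (hunit : ∀ n : ℕ, 0 < n → n ≤ g.natDegree → ‖(n : K)‖ = 1) (hsplit : g.derivative.Splits)
    (h0 : g.eval 0 = 0) (hcrit : ∀ c, g.derivative.IsRoot c → ‖c‖ ≤ 1 ∧ ‖g.eval c‖ < 1)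
    {c : K} (hc : g.derivative.IsRoot c) : ‖c‖ < 1 := by
  set O := (NormedField.valuation (K := K)).valuationSubring
  have hO : ∀ x : K, x ∈ O ↔ ‖x‖ ≤ 1 := fun x => by
    rw [Valuation.mem_valuationSubring_iff, NormedField.valuation_apply, ← NNReal.coe_le_coe]
    simp
  have hmax : ∀ a : O, a ∈ maximalIdeal O ↔ ‖(a : K)‖ < 1 := fun a => by
    rw [Valuation.mem_maximalIdeal_iff, NormedField.valuation_apply, ← NNReal.coe_lt_coe]
    simp
  have hpos : 0 < g.natDegree := by
    by_contra! h
    rw [hg.natDegree_eq_zero.mp (by omega), eval_one] at h0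
    exact one_ne_zero h0
  have hd : (g.natDegree : K) ≠ 0 :=
    norm_ne_zero_iff.mp (by rw [hunit _ hpos le_rfl]; exact one_ne_zero)
  have hcoeff : ∀ k, g.coeff k ∈ O := fun k => (hO _).mpr <| by
    simpa using norm_coeff_le_of_norm_critical_le hg hunit hsplit h0 zero_le_one
      (fun c hc => (hcrit c hc).1) k
  obtain ⟨q, hqg, hqdeg, hq⟩ := lifts_and_natDegree_eq_and_monic
    (f := algebraMap O K) ((lifts_iff_coeff_lifts g).mpr fun k => ⟨⟨_, hcoeff k⟩, rfl⟩) hg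
  have hroots : ∀ x ∈ g.derivative.roots, x ∈ O :=
    fun x hx => (hO x).mpr (hcrit x (isRoot_of_mem_roots hx)).1
  lift g.derivative.roots to Multiset O using hroots with t ht
  have hqder : q.derivative = C (q.natDegree : O) * (t.map (X - C ·)).prod := by
    apply map_injective (algebraMap O K) Subtype.val_injective
    rw [← derivative_map, hqg, hg.derivative_eq_C_mul_prod_roots hd hsplit, ← ht, hqdeg]
    simp [Polynomial.map_multiset_prod, Multiset.map_map]
  have hunitO : ∀ n : ℕ, 0 < n → n ≤ q.natDegree → IsUnit (n : O) := fun n hn hnd => by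
    rw [← IsLocalRing.notMem_maximalIdeal, hmax, not_lt]
    push_cast
    rw [hunit n hn (hqdeg ▸ hnd)]
  have hcoe : ∀ a : O, ((q.eval a : O) : K) = g.eval (a : K) := fun a => by
    rw [← hqg, eval_map]
    exact (eval₂_at_apply (algebraMap O K) a).symm
  have h0q : q.coeff 0 ∈ maximalIdeal O := by
    rw [hmax, coeff_zero_eq_eval_zero, hcoe]
    simp [h0]
  obtain ⟨a, hat, rfl⟩ := Multiset.mem_map.mp
    (ht ▸ (mem_roots (derivative_ne_zero_of_natCast_ne_zero hd)).mpr hc)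
  refine (hmax a).mp
    (mem_maximalIdeal_of_derivative_eq_prod hq hunitO hqder h0q (fun b hb => ?_) hat)
  rw [hmax, hcoe]
  exact (hcrit b (isRoot_of_mem_roots (ht ▸ Multiset.mem_map_of_mem _ hb))).2

theorem norm_max_critical_le_one [IsAlgClosed K] {f : K[X]} (hf : f.Monic)
    (hd : 2 ≤ f.natDegree) (hunit : ∀ n : ℕ, 0 < n → n ≤ f.natDegree → ‖(n : K)‖ = 1)
    (h0 : f.eval 0 = 0) {γ : K} (hγ : f.derivative.IsRoot γ)
    (hmax : ∀ c, f.derivative.IsRoot c → ‖c‖ ≤ ‖γ‖)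
    (hval : ∀ c, f.derivative.IsRoot c → ‖f.eval c‖ ≤ ‖γ‖) : ‖γ‖ ≤ 1 := by
  by_contra! hγ1
  have hγ0 : γ ≠ 0 := norm_pos_iff.mp (zero_lt_one.trans hγ1)
  have hdf : (f.natDegree : K) ≠ 0 :=
    norm_ne_zero_iff.mp (by rw [hunit _ (by omega) le_rfl]; exact one_ne_zero)
  -- `g w = γ⁻ᵈ f (γ w)`: a monic polynomial with the critical point `γ` moved to `1`
  set g := f.scaleRoots γ⁻¹
  have hevalg : ∀ w, g.eval w = γ⁻¹ ^ f.natDegree * f.eval (γ * w) := fun w => by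
    rw [← scaleRoots_eval_mul, inv_mul_cancel_left₀ hγ0]
  have hcritg : ∀ w, g.derivative.IsRoot w ↔ f.derivative.IsRoot (γ * w) := fun w => by
    have := scaleRoots_eval_mul f.derivative (γ * w) γ⁻¹
    rw [inv_mul_cancel_left₀ hγ0, ← derivative_scaleRoots
      (natDegree_derivative_of_natCast_ne_zero hdf)] at this
    rw [IsRoot, IsRoot, this, mul_eq_zero, or_iff_right (pow_ne_zero _ (inv_ne_zero hγ0))]
  have hcrit : ∀ w, g.derivative.IsRoot w → ‖w‖ ≤ 1 ∧ ‖g.eval w‖ < 1 := by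
    intro w hw
    rw [hcritg] at hw
    refine ⟨le_of_mul_le_mul_left ?_ (zero_lt_one.trans hγ1), ?_⟩
    · simpa [norm_mul] using hmax _ hw
    calc ‖g.eval w‖ = ‖f.eval (γ * w)‖ / ‖γ‖ ^ f.natDegree := by
          rw [hevalg, norm_mul, norm_pow, norm_inv, inv_pow, inv_mul_eq_div]
      _ ≤ ‖γ‖ / ‖γ‖ ^ f.natDegree := by gcongr; exact hval _ hw
      _ < 1 := (div_lt_one (by positivity)).mpr (lt_self_pow₀ hγ1 (by omega))
  have := norm_critical_lt_one_of_norm_critical_value_lt_one ((monic_scaleRoots_iff _).mpr hf)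
    (by rwa [natDegree_scaleRoots]) (IsAlgClosed.splits _) (by rw [hevalg, mul_zero, h0, mul_zero])
    hcrit ((hcritg 1).mpr (by rwa [mul_one]))
  simp at this

theorem norm_critical_le_one_of_bounded_orbit [IsAlgClosed K] {f : K[X]} (hf : f.Monic)
    (hd : 2 ≤ f.natDegree) (hunit : ∀ n : ℕ, 0 < n → n ≤ f.natDegree → ‖(n : K)‖ = 1)
    (h0 : f.eval 0 = 0)
    (hbdd : ∀ c, f.derivative.IsRoot c → ∃ B, ∀ n, ‖(fun z => f.eval z)^[n] c‖ ≤ B)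
    {c : K} (hc : f.derivative.IsRoot c) : ‖c‖ ≤ 1 := by
  have hdf : (f.natDegree : K) ≠ 0 :=
    norm_ne_zero_iff.mp (by rw [hunit _ (by omega) le_rfl]; exact one_ne_zero)
  have hf' : f.derivative ≠ 0 := derivative_ne_zero_of_natCast_ne_zero hdf
  have hcr : c ∈ f.derivative.roots := (mem_roots hf').mpr hc
  obtain ⟨γ, hγ, hmax⟩ := Multiset.exists_max_image (s := f.derivative.roots) (‖·‖)
    fun h => by simp [h] at hcr
  rw [mem_roots hf'] at hγ
  replace hmax : ∀ c, f.derivative.IsRoot c → ‖c‖ ≤ ‖γ‖ :=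
    fun c hc => hmax c ((mem_roots hf').mpr hc)
  refine (hmax c hc).trans (le_of_not_gt fun hγ1 => ?_)
  have hcoeff := norm_coeff_le_of_norm_critical_le hf hunit (IsAlgClosed.splits _) h0
    (norm_nonneg γ) hmax
  have hesc : ∀ z, ‖γ‖ < ‖z‖ → ‖z‖ ^ 2 ≤ ‖f.eval z‖ := fun z hz => by
    rw [norm_eval_eq_of_norm_coeff_le hf (norm_nonneg γ) (fun k _ => hcoeff k) hz]
    exact pow_le_pow_right₀ (hγ1.le.trans hz.le) hd
  refine (norm_max_critical_le_one hf hd hunit h0 hγ hmax fun c hc => ?_).not_gt hγ1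
  simpa using norm_iterate_le_of_bounded_orbit hγ1.le hesc (hbdd c hc) 1

theorem norm_iterate_critical_le_one [IsAlgClosed K] {f : K[X]} (hf : f.Monic)
    (hunit : ∀ n : ℕ, 0 < n → n ≤ f.natDegree → ‖(n : K)‖ = 1) (h0 : f.eval 0 = 0)
    (hcrit : ∀ c, f.derivative.IsRoot c → ‖c‖ ≤ 1) {c : K} (hc : f.derivative.IsRoot c) (n : ℕ) :
    ‖(fun z => f.eval z)^[n] c‖ ≤ 1 := by
  have hcoeff : ∀ k, ‖f.coeff k‖ ≤ 1 := fun k => by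
    simpa using norm_coeff_le_of_norm_critical_le hf hunit (IsAlgClosed.splits _) h0 zero_le_one
      hcrit k
  have hmaps : Set.MapsTo (fun z => f.eval z) (Metric.closedBall 0 1) (Metric.closedBall 0 1) :=
    fun z hz => by simpa using norm_eval_le_one hcoeff (by simpa using hz)
  simpa using hmaps.iterate n (by simpa using hcrit c hc)

end Polynomial

theorem stmt_3_general (K : Type*) [NormedField K] [IsAlgClosed K]
    (hna : IsNonarchimedean (fun x : K => ‖x‖))
    (p : ℕ) (hp : p.Prime)
    (hext : ∀ q : ℚ, ‖(q : K)‖ = (padicNorm p q : ℝ))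
    (d : ℕ) (hd : 2 ≤ d) (hpd : d < p)
    (f : K[X]) (hmonic : f.Monic) (hdeg : f.natDegree = d) (hf0 : f.eval 0 = 0) :
    (∀ c : K, f.derivative.eval c = 0 →
      ∃ B : ℝ, ∀ n : ℕ, ‖(fun z => f.eval z)^[n] c‖ ≤ B) ↔
    (∀ c : K, f.derivative.eval c = 0 → ‖c‖ ≤ 1) := by
  have := IsUltrametricDist.isUltrametricDist_of_isNonarchimedean_norm hna
  have := Fact.mk hp
  subst hdeg
  have hunit : ∀ n : ℕ, 0 < n → n ≤ f.natDegree → ‖(n : K)‖ = 1 := fun n hn hnd => by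
    rw [← Rat.cast_natCast, hext, (padicNorm.nat_eq_one_iff n).mpr
      (Nat.not_dvd_of_pos_of_lt hn (by omega)), Rat.cast_one]
  exact ⟨fun hbdd c hc => norm_critical_le_one_of_bounded_orbit hmonic hd hunit hf0 hbdd hc,
    fun hcrit c hc => ⟨1, norm_iterate_critical_le_one hmonic hunit hf0 hcrit hc⟩⟩

/-- Let `d ≥ 2` be an integer and `p` a prime with `p > d`. A polynomial
`f ∈ P_d` is post-critically bounded iff every critical point `c` satisfies `|c| ≤ 1`. -/
theorem stmt_3 (K : Type*) [NormedField K] [IsAlgClosed K] [CompleteSpace K]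
    (hna : IsNonarchimedean (fun x : K => ‖x‖))
    (p : ℕ) (hp : p.Prime)
    (hext : ∀ q : ℚ, ‖(q : K)‖ = (padicNorm p q : ℝ))
    (d : ℕ) (hd : 2 ≤ d) (hpd : d < p)
    (f : K[X]) (hmonic : f.Monic) (hdeg : f.natDegree = d) (hf0 : f.eval 0 = 0) :
    (∀ c : K, f.derivative.eval c = 0 →
      ∃ B : ℝ, ∀ n : ℕ, ‖(fun z => f.eval z)^[n] c‖ ≤ B) ↔
    (∀ c : K, f.derivative.eval c = 0 → ‖c‖ ≤ 1) :=
  stmt_3_general K hna p hp hext d hd hpd f hmonic hdeg hf0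
end

section
/- Let p be a prime, k ≥ 1 an integer, and d = p^k. A polynomial f ∈ P_d is post-critically bounded if and only if every critical point c of f satisfies |c| ≤ 1. -/
/-!
Write `d = p ^ k` and `f = ∑ aᵢ zⁱ`. By Vieta applied to `f' = d ∏ (z - cⱼ)`, the coefficient
`i aᵢ` of `f'` is `± d` times an elementary symmetric function of the critical points, so if all
`|cⱼ| ≤ r` the ultrametric inequality gives `|i aᵢ| ≤ |d| rᵈ⁻ⁱ`. For `0 < i < d` we have
`|d| ≤ p⁻¹ |i|`, hence `|aᵢ| ≤ p⁻¹ rᵈ⁻ⁱ`. With `r = 1` all coefficients are integral and `f`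
maps the closed unit disk to itself. If instead a critical point `m` of maximal norm has
`r = |m| > 1`, then `z ↦ zᵈ` dominates `f` on `|z| ≥ r`, so `|f(z)| = |z|ᵈ ≥ r |z|` there and the
orbit of `m` escapes.
-/

open Polynomial

theorem Multiset.norm_prod_le_pow_card {K : Type*} [NormedField K] {s : Multiset K} {C : ℝ}
    (hC : 0 ≤ C) (h : ∀ x ∈ s, ‖x‖ ≤ C) : ‖s.prod‖ ≤ C ^ Multiset.card s := by
  induction s using Multiset.induction_on with
  | empty => simp
  | cons a s ih =>
    rw [Multiset.forall_mem_cons] at h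
    rw [Multiset.prod_cons, Multiset.card_cons, norm_mul, pow_succ']
    exact mul_le_mul h.1 (ih h.2) (norm_nonneg _) hC

theorem IsUltrametricDist.norm_multiset_sum_le_of_forall_le_of_nonneg {M : Type*}
    [SeminormedAddCommGroup M] [IsUltrametricDist M] {s : Multiset M} {C : ℝ}
    (hC : 0 ≤ C) (h : ∀ x ∈ s, ‖x‖ ≤ C) : ‖s.sum‖ ≤ C := by
  induction s using Multiset.induction_on with
  | empty => simpa using hC
  | cons a s ih =>
    rw [Multiset.forall_mem_cons] at h
    rw [Multiset.sum_cons]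
    exact (IsUltrametricDist.norm_add_le_max a s.sum).trans (max_le h.1 (ih h.2))

section Ultrametric

variable {K : Type*} [NormedField K] [IsUltrametricDist K]

theorem IsUltrametricDist.norm_esymm_le {s : Multiset K} {C : ℝ} (hC : 0 ≤ C)
    (h : ∀ x ∈ s, ‖x‖ ≤ C) (m : ℕ) : ‖s.esymm m‖ ≤ C ^ m := by
  refine norm_multiset_sum_le_of_forall_le_of_nonneg (pow_nonneg hC m) ?_
  simp only [Multiset.mem_map, Multiset.mem_powersetCard]
  rintro _ ⟨t, ⟨hts, rfl⟩, rfl⟩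
  exact Multiset.norm_prod_le_pow_card hC fun x hx => h x (Multiset.mem_of_le hts hx)

theorem Polynomial.norm_coeff_le_of_forall_isRoot_norm_le [IsAlgClosed K] {g : K[X]} {C : ℝ}
    (hC : 0 ≤ C) (h : ∀ x, g.IsRoot x → ‖x‖ ≤ C) {i : ℕ} (hi : i ≤ g.natDegree) :
    ‖g.coeff i‖ ≤ ‖g.leadingCoeff‖ * C ^ (g.natDegree - i) := by
  rw [coeff_eq_esymm_roots_of_card (splits_iff_card_roots.mp (IsAlgClosed.splits g)) hi,
    norm_mul, norm_mul, norm_pow, norm_neg, norm_one, one_pow, mul_one]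
  exact mul_le_mul_of_nonneg_left
    (IsUltrametricDist.norm_esymm_le hC (fun x hx => h x (mem_roots'.mp hx).2) _) (norm_nonneg _)

theorem Polynomial.Monic.norm_eval_eq_pow_natDegree {f : K[X]} (hf : f.Monic) {ε r : ℝ}
    (hε₀ : 0 ≤ ε) (hε₁ : ε < 1) (hr : 0 < r)
    (hcoeff : ∀ i < f.natDegree, ‖f.coeff i‖ ≤ ε * r ^ (f.natDegree - i)) {z : K}
    (hz : r ≤ ‖z‖) : ‖f.eval z‖ = ‖z‖ ^ f.natDegree := by
  set d := f.natDegree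
  have hlower : ‖∑ i ∈ Finset.range d, f.coeff i * z ^ i‖ ≤ ε * ‖z‖ ^ d := by
    refine IsUltrametricDist.norm_sum_le_of_forall_le_of_nonneg (by positivity) fun i hi => ?_
    have hid : i < d := Finset.mem_range.mp hi
    calc ‖f.coeff i * z ^ i‖ ≤ ε * r ^ (d - i) * ‖z‖ ^ i := by
          rw [norm_mul, norm_pow]; gcongr; exact hcoeff i hid
      _ ≤ ε * ‖z‖ ^ (d - i) * ‖z‖ ^ i := by gcongr
      _ = ε * ‖z‖ ^ d := by rw [mul_assoc, ← pow_add, Nat.sub_add_cancel hid.le]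
  have hlt : ‖∑ i ∈ Finset.range d, f.coeff i * z ^ i‖ < ‖z ^ d‖ := by
    rw [norm_pow]
    exact hlower.trans_lt (mul_lt_of_lt_one_left (pow_pos (hr.trans_le hz) d) hε₁)
  rw [eval_eq_sum_range, Finset.sum_range_succ, hf.coeff_natDegree, one_mul, add_comm,
    IsUltrametricDist.norm_add_eq_max_of_norm_ne_norm hlt.ne', max_eq_left hlt.le, norm_pow]

theorem Polynomial.norm_eval_le_one_s4 {f : K[X]} (hf : ∀ i, ‖f.coeff i‖ ≤ 1) {z : K}
    (hz : ‖z‖ ≤ 1) : ‖f.eval z‖ ≤ 1 := by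
  rw [eval_eq_sum_range]
  refine IsUltrametricDist.norm_sum_le_of_forall_le_of_nonneg zero_le_one fun i _ => ?_
  rw [norm_mul, norm_pow]
  exact mul_le_one₀ (hf i) (by positivity) (pow_le_one₀ (norm_nonneg z) hz)

end Ultrametric

theorem Polynomial.exists_isRoot_forall_isRoot_norm_le {K : Type*} [NormedField K] {g : K[X]}
    (hg : g ≠ 0) {c : K} (hc : g.IsRoot c) :
    ∃ m, g.IsRoot m ∧ ∀ x, g.IsRoot x → ‖x‖ ≤ ‖m‖ := by
  classical
  obtain ⟨m, hm, hmax⟩ := g.roots.toFinset.exists_max_image (‖·‖)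
    ⟨c, Multiset.mem_toFinset.mpr ((mem_roots hg).mpr hc)⟩
  simp only [Multiset.mem_toFinset, mem_roots hg] at hm hmax
  exact ⟨m, hm, hmax⟩

theorem exists_lt_norm_iterate {E : Type*} [Norm E] {F : E → E} {r : ℝ} (hr : 1 < r)
    (hF : ∀ z, r ≤ ‖z‖ → r * ‖z‖ ≤ ‖F z‖) {z : E} (hz : r ≤ ‖z‖) (B : ℝ) :
    ∃ n, B < ‖F^[n] z‖ := by
  have hgrowth : ∀ n, r ^ n * ‖z‖ ≤ ‖F^[n] z‖ := by
    intro n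
    induction n with
    | zero => simp
    | succ n ih =>
      have hstays : r ≤ ‖F^[n] z‖ :=
        hz.trans ((le_mul_of_one_le_left (by linarith) (one_le_pow₀ hr.le)).trans ih)
      rw [Function.iterate_succ_apply', pow_succ', mul_assoc]
      exact (mul_le_mul_of_nonneg_left ih (by linarith)).trans (hF _ hstays)
  obtain ⟨n, hn⟩ := pow_unbounded_of_one_lt B hr
  exact ⟨n, hn.trans_le ((le_mul_of_one_le_right (by positivity) (by linarith)).trans
    (hgrowth n))⟩

theorem padicNorm_natCast_prime_pow_le {p : ℕ} [Fact p.Prime] {k i : ℕ} (hi₀ : i ≠ 0)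
    (hik : i < p ^ k) : padicNorm p ((p ^ k : ℕ) : ℚ) ≤ (p : ℚ)⁻¹ * padicNorm p i := by
  have hp := (Fact.out : p.Prime).one_lt
  have hval : padicValNat p i < k := by
    have := (Nat.le_of_dvd (Nat.pos_of_ne_zero hi₀) (pow_padicValNat_dvd (p := p))).trans_lt hik
    exact (Nat.pow_lt_pow_iff_right hp).mp this
  rw [padicNorm.eq_zpow_of_nonzero (by positivity), padicNorm.eq_zpow_of_nonzero (by simpa),
    ← zpow_neg_one, ← zpow_add₀ (by positivity), padicValRat.of_nat, padicValRat.of_nat,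
    padicValNat.prime_pow]
  exact zpow_le_zpow_right₀ (by exact_mod_cast hp.le) (by omega)

section PadicNorm

variable {K : Type*} [NormedField K] {p : ℕ} (hext : ∀ q : ℚ, ‖(q : K)‖ = padicNorm p q)
include hext

theorem norm_natCast_eq_padicNorm (n : ℕ) : ‖(n : K)‖ = padicNorm p n := by
  simpa using hext n

variable [Fact p.Prime]

theorem charZero_of_norm_eq_padicNorm : CharZero K := by
  refine charZero_of_inj_zero fun n hn => ?_
  have := norm_natCast_eq_padicNorm hext n
  rw [hn, norm_zero, eq_comm] at this
  exact Nat.cast_eq_zero.mp (padicNorm.zero_of_padicNorm_eq_zero (p := p) (by exact_mod_cast this))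

theorem Polynomial.Monic.norm_coeff_le_of_forall_critical_norm_le [IsUltrametricDist K]
    [IsAlgClosed K] {k : ℕ} {f : K[X]} (hf : f.Monic) (hdeg : f.natDegree = p ^ k)
    (hf0 : f.coeff 0 = 0) {r : ℝ} (hr : 0 ≤ r) (hcrit : ∀ c, f.derivative.IsRoot c → ‖c‖ ≤ r)
    {i : ℕ} (hi : i < p ^ k) : ‖f.coeff i‖ ≤ (p : ℝ)⁻¹ * r ^ (p ^ k - i) := by
  have := charZero_of_norm_eq_padicNorm hext
  obtain _ | j := i
  · rw [hf0, norm_zero]; positivity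
  have hderiv := f.derivative.norm_coeff_le_of_forall_isRoot_norm_le hr hcrit
    (i := j) (by rw [natDegree_derivative, hdeg]; omega)
  rw [coeff_derivative, leadingCoeff_derivative, natDegree_derivative, hf.leadingCoeff, one_mul,
    hdeg, norm_mul, show p ^ k - 1 - j = p ^ k - (j + 1) by omega] at hderiv
  have hj : ‖((j : K) + 1)‖ = padicNorm p (j + 1 : ℕ) := by
    exact_mod_cast norm_natCast_eq_padicNorm hext (j + 1)
  have hpk : ‖((p ^ k : ℕ) : K)‖ ≤ (p : ℝ)⁻¹ * ‖((j : K) + 1)‖ := by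
    rw [norm_natCast_eq_padicNorm hext, hj]
    have := (Rat.cast_le (K := ℝ)).mpr (padicNorm_natCast_prime_pow_le (i := j + 1) (by omega) hi)
    push_cast at this ⊢
    exact this
  have hj_pos : 0 < ‖((j : K) + 1)‖ := by
    rw [hj]
    exact_mod_cast (padicNorm.nonneg _).lt_of_ne' fun h =>
      (j.succ_ne_zero (by exact_mod_cast padicNorm.zero_of_padicNorm_eq_zero h))
  refine le_of_mul_le_mul_right ?_ hj_pos
  calc ‖f.coeff (j + 1)‖ * ‖(j : K) + 1‖ ≤ ‖((p ^ k : ℕ) : K)‖ * r ^ (p ^ k - (j + 1)) := by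
        exact_mod_cast hderiv
    _ ≤ (p : ℝ)⁻¹ * ‖(j : K) + 1‖ * r ^ (p ^ k - (j + 1)) := by gcongr
    _ = (p : ℝ)⁻¹ * r ^ (p ^ k - (j + 1)) * ‖(j : K) + 1‖ := by ring

theorem Polynomial.Monic.exists_critical_forall_lt_norm_iterate [IsUltrametricDist K]
    [IsAlgClosed K] {k : ℕ} (hk : 1 ≤ k) {f : K[X]} (hf : f.Monic) (hdeg : f.natDegree = p ^ k)
    (hf0 : f.coeff 0 = 0) {c : K} (hc : f.derivative.IsRoot c) (hc1 : 1 < ‖c‖) :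
    ∃ m, f.derivative.IsRoot m ∧ ∀ B : ℝ, ∃ n, B < ‖(fun z => f.eval z)^[n] m‖ := by
  have := charZero_of_norm_eq_padicNorm hext
  have hp := (Fact.out : p.Prime).one_lt
  have hf' : f.derivative ≠ 0 := derivative_ne_zero.mpr (by rw [hdeg]; positivity)
  obtain ⟨m, hm, hmax⟩ := exists_isRoot_forall_isRoot_norm_le hf' hc
  have hr : 1 < ‖m‖ := hc1.trans_le (hmax c hc)
  have hescape (z : K) (hz : ‖m‖ ≤ ‖z‖) : ‖m‖ * ‖z‖ ≤ ‖f.eval z‖ := by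
    have hcoeff : ∀ i < f.natDegree, ‖f.coeff i‖ ≤ (p : ℝ)⁻¹ * ‖m‖ ^ (f.natDegree - i) := by
      rw [hdeg]
      exact fun i hi => hf.norm_coeff_le_of_forall_critical_norm_le hext hdeg hf0 (norm_nonneg m)
        hmax hi
    rw [hf.norm_eval_eq_pow_natDegree (by positivity)
      (inv_lt_one_of_one_lt₀ (by exact_mod_cast hp)) (zero_lt_one.trans hr) hcoeff hz, hdeg]
    calc ‖m‖ * ‖z‖ ≤ ‖z‖ ^ 2 := by rw [sq]; gcongr
      _ ≤ ‖z‖ ^ p ^ k := pow_le_pow_right₀ (hr.le.trans hz)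
          (hp.trans_le (Nat.le_self_pow (by omega) p))
  exact ⟨m, hm, exists_lt_norm_iterate hr hescape le_rfl⟩

theorem Polynomial.Monic.norm_eval_le_one_of_forall_critical_norm_le_one [IsUltrametricDist K]
    [IsAlgClosed K] {k : ℕ} {f : K[X]} (hf : f.Monic) (hdeg : f.natDegree = p ^ k)
    (hf0 : f.coeff 0 = 0) (hcrit : ∀ c, f.derivative.IsRoot c → ‖c‖ ≤ 1) {z : K}
    (hz : ‖z‖ ≤ 1) : ‖f.eval z‖ ≤ 1 := by
  refine norm_eval_le_one_s4 (fun i => ?_) hz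
  rcases lt_trichotomy i (p ^ k) with hi | rfl | hi
  · calc ‖f.coeff i‖ ≤ (p : ℝ)⁻¹ * 1 ^ (p ^ k - i) :=
          hf.norm_coeff_le_of_forall_critical_norm_le hext hdeg hf0 zero_le_one hcrit hi
      _ ≤ 1 := by
          rw [one_pow, mul_one]
          exact inv_le_one_of_one_le₀ (by exact_mod_cast (Fact.out : p.Prime).one_le)
  · rw [← hdeg, hf.coeff_natDegree, norm_one]
  · rw [coeff_eq_zero_of_natDegree_lt (hdeg ▸ hi), norm_zero]
    exact zero_le_one

end PadicNorm

theorem stmt_4_general (K : Type*) [NormedField K] [IsAlgClosed K]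
    (hna : IsNonarchimedean (fun x : K => ‖x‖))
    (p : ℕ) (hp : p.Prime)
    (hext : ∀ q : ℚ, ‖(q : K)‖ = (padicNorm p q : ℝ))
    (k : ℕ) (hk : 1 ≤ k)
    (f : K[X]) (hmonic : f.Monic) (hdeg : f.natDegree = p ^ k) (hf0 : f.eval 0 = 0) :
    (∀ c : K, f.derivative.eval c = 0 →
      ∃ B : ℝ, ∀ n : ℕ, ‖(fun z => f.eval z)^[n] c‖ ≤ B) ↔
    (∀ c : K, f.derivative.eval c = 0 → ‖c‖ ≤ 1) := by
  have : Fact p.Prime := ⟨hp⟩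
  have : IsUltrametricDist K := .isUltrametricDist_of_isNonarchimedean_norm hna
  rw [← coeff_zero_eq_eval_zero] at hf0
  constructor
  · intro hbounded c hc
    by_contra! hc1
    obtain ⟨m, hm, hescape⟩ :=
      hmonic.exists_critical_forall_lt_norm_iterate hext hk hdeg hf0 hc hc1
    obtain ⟨B, hB⟩ := hbounded m hm
    obtain ⟨n, hn⟩ := hescape B
    exact (hn.trans_le (hB n)).false
  · intro hcrit c hc
    refine ⟨1, fun n => ?_⟩
    induction n with
    | zero => exact hcrit c hc
    | succ n ih =>
      rw [Function.iterate_succ_apply']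
      exact hmonic.norm_eval_le_one_of_forall_critical_norm_le_one hext hdeg hf0 hcrit ih

/-- Let `p` be a prime, `k ≥ 1`, and `d = p^k`. A polynomial `f ∈ P_d`
is post-critically bounded iff every critical point `c` satisfies `|c| ≤ 1`. -/
theorem stmt_4 (K : Type*) [NormedField K] [IsAlgClosed K] [CompleteSpace K]
    (hna : IsNonarchimedean (fun x : K => ‖x‖))
    (p : ℕ) (hp : p.Prime)
    (hext : ∀ q : ℚ, ‖(q : K)‖ = (padicNorm p q : ℝ))
    (k : ℕ) (hk : 1 ≤ k)
    (f : K[X]) (hmonic : f.Monic) (hdeg : f.natDegree = p ^ k) (hf0 : f.eval 0 = 0) :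
    (∀ c : K, f.derivative.eval c = 0 →
      ∃ B : ℝ, ∀ n : ℕ, ‖(fun z => f.eval z)^[n] c‖ ≤ B) ↔
    (∀ c : K, f.derivative.eval c = 0 → ‖c‖ ≤ 1) :=
  stmt_4_general K hna p hp hext k hk f hmonic hdeg hf0
end

section
/- Let f ∈ K[z] be a polynomial of degree d ≥ 1, let D = {z ∈ K : |z − a| ≤ s} be a closed disk with s > 0, and let m be a positive integer with p ∤ m. Suppose f maps D exactly m-to-1 onto its image f(D) = {f(z) : z ∈ D}, i.e. for every w ∈ f(D) the polynomial f(z) − w has exactly m roots in D counted with multiplicity. Then the derivative f′ has exactly m − 1 roots in D, counted with multiplicity. -/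
/-!
Count roots with the Newton polygon. For `g ∈ K[X]` and `s > 0`, call `n` the dominant index of `g`
at radius `s` if `n` is the largest index maximising `‖g.coeff i‖ * s ^ i`. By the ultrametric
inequality dominant indices add under multiplication, and `X - C r` has dominant index `1` or `0`
according as `‖r‖ ≤ s` or not; factoring `g(X + a)` over the algebraically closed field `K`, its
dominant index is the number of roots of `g` in the closed disk `|z - a| ≤ s`.

The fibre of `f` over `f(a)` has `m` roots in the disk, so `f(X + a) - f(a)` has dominant index `m`.
Differentiating multiplies the `i`-th coefficient by `i`, of norm `≤ 1`, and shifts indices down by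
one; since `|m| = 1` the dominant index of `f'(X + a)` is `m - 1`.
-/

open Polynomial

namespace Polynomial

variable {K : Type*} [NormedField K]

structure IsDominantIndex (g : K[X]) (s : ℝ) (n : ℕ) : Prop where
  le : ∀ i, ‖g.coeff i‖ * s ^ i ≤ ‖g.coeff n‖ * s ^ n
  lt : ∀ i, n < i → ‖g.coeff i‖ * s ^ i < ‖g.coeff n‖ * s ^ n

theorem exists_norm_coeff_mul_le (hna : IsNonarchimedean (‖·‖ : K → ℝ)) (g h : K[X]) (i : ℕ) :
    ∃ x y, x + y = i ∧ ‖(g * h).coeff i‖ ≤ ‖g.coeff x * h.coeff y‖ := by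
  obtain ⟨⟨x, y⟩, hxy, hle⟩ := hna.finset_image_add_of_nonempty
    (fun p : ℕ × ℕ => g.coeff p.1 * h.coeff p.2)
    ⟨(i, 0), Finset.HasAntidiagonal.mem_antidiagonal.mpr (add_zero i)⟩
  exact ⟨x, y, Finset.HasAntidiagonal.mem_antidiagonal.mp hxy, by rwa [coeff_mul]⟩

theorem norm_coeff_mul_eq_of_lt (hna : IsNonarchimedean (‖·‖ : K → ℝ)) {g h : K[X]} {n k : ℕ}
    (hlt : ∀ x y, x + y = n + k → n < x ∨ k < y →
      ‖g.coeff x * h.coeff y‖ < ‖g.coeff n * h.coeff k‖) :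
    ‖(g * h).coeff (n + k)‖ = ‖g.coeff n * h.coeff k‖ := by
  rw [coeff_mul]
  refine hna.apply_sum_eq_of_lt (fun x => (norm_neg x).symm) (k := (n, k)) (by simp) ?_
  rintro ⟨x, y⟩ hxy hne
  rw [Finset.HasAntidiagonal.mem_antidiagonal] at hxy
  refine hlt x y hxy ?_
  by_contra! hle
  exact hne (Prod.ext (by omega) (by omega))

namespace IsDominantIndex

variable {g h : K[X]} {s : ℝ} {n k : ℕ}

theorem unique (hn : IsDominantIndex g s n) (hk : IsDominantIndex g s k) : n = k := by
  rcases lt_trichotomy n k with hnk | rfl | hkn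
  · exact absurd (hk.le n) (not_le.mpr (hn.lt k hnk))
  · rfl
  · exact absurd (hn.le k) (not_le.mpr (hk.lt n hkn))

theorem norm_coeff_mul_pow_pos (hg : IsDominantIndex g s n) (hs : 0 < s) :
    0 < ‖g.coeff n‖ * s ^ n :=
  lt_of_le_of_lt (by positivity) (hg.lt (n + 1) n.lt_succ_self)

theorem coeff_ne_zero (hg : IsDominantIndex g s n) (hs : 0 < s) : g.coeff n ≠ 0 := by
  have := hg.norm_coeff_mul_pow_pos hs
  rintro h
  simp [h] at this

theorem mul (hna : IsNonarchimedean (‖·‖ : K → ℝ)) (hs : 0 < s)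
    (hg : IsDominantIndex g s n) (hh : IsDominantIndex h s k) :
    IsDominantIndex (g * h) s (n + k) := by
  set M := ‖g.coeff n‖ * s ^ n
  set N := ‖h.coeff k‖ * s ^ k
  have hM := hg.norm_coeff_mul_pow_pos hs
  have hN := hh.norm_coeff_mul_pow_pos hs
  have term_eq : ∀ x y, ‖g.coeff x * h.coeff y‖ * s ^ (x + y)
      = (‖g.coeff x‖ * s ^ x) * (‖h.coeff y‖ * s ^ y) := by
    intro x y
    rw [norm_mul, pow_add]
    ring
  have term_le : ∀ x y, ‖g.coeff x * h.coeff y‖ * s ^ (x + y) ≤ M * N := fun x y =>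
    (term_eq x y).trans_le (mul_le_mul (hg.le x) (hh.le y) (by positivity) hM.le)
  have term_lt : ∀ x y, n < x ∨ k < y → ‖g.coeff x * h.coeff y‖ * s ^ (x + y) < M * N := by
    rintro x y (hx | hy) <;> rw [term_eq]
    · exact mul_lt_mul_of_lt_of_le_of_nonneg_of_pos (hg.lt x hx) (hh.le y) (by positivity) hN
    · exact mul_lt_mul_of_le_of_lt_of_nonneg_of_pos (hg.le x) (hh.lt y hy) (by positivity) hM
  have top : ‖(g * h).coeff (n + k)‖ * s ^ (n + k) = M * N := by
    rw [← term_eq, norm_coeff_mul_eq_of_lt hna fun x y hxy hxy' => ?_]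
    have := (term_lt x y hxy').trans_eq (term_eq n k).symm
    rw [hxy] at this
    exact lt_of_mul_lt_mul_right this (by positivity)
  refine ⟨fun i => ?_, fun i hi => ?_⟩ <;>
    obtain ⟨x, y, rfl, hle⟩ := exists_norm_coeff_mul_le hna g h i <;>
    rw [top]
  · exact (mul_le_mul_of_nonneg_right hle (by positivity)).trans (term_le x y)
  · exact (mul_le_mul_of_nonneg_right hle (by positivity)).trans_lt (term_lt x y (by omega))

theorem derivative (hna : IsNonarchimedean (‖·‖ : K → ℝ)) (hs : 0 < s)
    (hg : IsDominantIndex g s n) (hn : ‖(n : K)‖ = 1) :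
    IsDominantIndex (derivative g) s (n - 1) := by
  have := IsUltrametricDist.isUltrametricDist_of_isNonarchimedean_norm hna
  obtain ⟨k, rfl⟩ : ∃ k, n = k + 1 :=
    Nat.exists_eq_succ_of_ne_zero (by rintro rfl; simp at hn)
  rw [Nat.add_sub_cancel]
  have norm_coeff : ∀ i, ‖(Polynomial.derivative g).coeff i‖ * s ^ i * s
      = ‖((i + 1 : ℕ) : K)‖ * (‖g.coeff (i + 1)‖ * s ^ (i + 1)) := by
    intro i
    rw [coeff_derivative, norm_mul, pow_succ, Nat.cast_succ]
    ring
  have step : ∀ i, ‖(Polynomial.derivative g).coeff i‖ * s ^ i * s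
      ≤ ‖g.coeff (i + 1)‖ * s ^ (i + 1) := fun i =>
    (norm_coeff i).trans_le <| mul_le_of_le_one_left (by positivity)
      (IsUltrametricDist.norm_natCast_le_one K (i + 1))
  have top : ‖(Polynomial.derivative g).coeff k‖ * s ^ k * s = ‖g.coeff (k + 1)‖ * s ^ (k + 1) := by
    rw [norm_coeff, hn, one_mul]
  refine ⟨fun i => ?_, fun i hi => ?_⟩
  · refine le_of_mul_le_mul_right ?_ hs
    rw [top]
    exact (step i).trans (hg.le (i + 1))
  · refine lt_of_mul_lt_mul_right ?_ hs.le
    rw [top]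
    exact (step i).trans_lt (hg.lt (i + 1) (by omega))

end IsDominantIndex

theorem isDominantIndex_C {c : K} (hc : c ≠ 0) (s : ℝ) : IsDominantIndex (C c) s 0 where
  le i := by cases i <;> simp [coeff_C]
  lt i hi := by simp [coeff_C, hi.ne', hc]

theorem isDominantIndex_X_sub_C {s : ℝ} (hs : 0 < s) (r : K) :
    IsDominantIndex (X - C r) s (if ‖r‖ ≤ s then 1 else 0) := by
  split_ifs with hr
  · refine ⟨fun i => ?_, fun i hi => ?_⟩
    · rcases i with _ | _ | i <;> simp [coeff_X, coeff_C, hr, hs.le]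
    · obtain ⟨i, rfl⟩ := Nat.exists_eq_add_of_lt hi
      simp [coeff_X, hs]
  · push Not at hr
    refine ⟨fun i => ?_, fun i hi => ?_⟩
    · rcases i with _ | _ | i <;> simp [coeff_X, coeff_C, hr.le, (hs.trans hr).le]
    · rcases i with _ | _ | i
      · omega
      · simpa [coeff_X, coeff_C] using hr
      · simpa [coeff_X, coeff_C] using hs.trans hr

theorem isDominantIndex_multiset_prod_X_sub_C (hna : IsNonarchimedean (‖·‖ : K → ℝ))
    {s : ℝ} (hs : 0 < s) (t : Multiset K) :
    IsDominantIndex (t.map fun r => X - C r).prod s (t.filter (‖·‖ ≤ s)).card := by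
  induction t using Multiset.induction with
  | empty =>
    have h1 := isDominantIndex_C (one_ne_zero : (1 : K) ≠ 0) s
    rw [C_1] at h1
    simpa using h1
  | cons r t ih =>
    rw [Multiset.map_cons, Multiset.prod_cons, ← Multiset.countP_eq_card_filter,
      Multiset.countP_cons, Multiset.countP_eq_card_filter, add_comm]
    exact (isDominantIndex_X_sub_C hs r).mul hna hs ih

variable [IsAlgClosed K]

theorem isDominantIndex_card_roots (hna : IsNonarchimedean (‖·‖ : K → ℝ))
    {s : ℝ} (hs : 0 < s) {g : K[X]} (hg : g ≠ 0) :
    IsDominantIndex g s (g.roots.filter (‖·‖ ≤ s)).card := by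
  have h := (isDominantIndex_C (leadingCoeff_ne_zero.mpr hg) s).mul hna hs
    (isDominantIndex_multiset_prod_X_sub_C hna hs g.roots)
  rwa [zero_add, C_leadingCoeff_mul_prod_multiset_X_sub_C
    (IsAlgClosed.splits g).natDegree_eq_card_roots.symm] at h

theorem isDominantIndex_comp_X_add_C_card_roots (hna : IsNonarchimedean (‖·‖ : K → ℝ))
    {s : ℝ} (hs : 0 < s) {g : K[X]} (hg : g ≠ 0) (a : K) :
    IsDominantIndex (g.comp (X + C a)) s (g.roots.filter (‖· - a‖ ≤ s)).card := by
  have hroots : (g.comp (X + C a)).roots.map (· + a) = g.roots := by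
    simpa using map_roots_comp_C_mul_X_add_C g 1 a isUnit_one
  convert isDominantIndex_card_roots hna hs (comp_X_add_C_ne_zero_iff.mpr hg) using 1
  rw [← hroots, Multiset.filter_map, Multiset.card_map]
  simp

end Polynomial

theorem stmt_7_general (K : Type*) [NormedField K] [IsAlgClosed K]
    (hna : IsNonarchimedean (fun x : K => ‖x‖))
    (p : ℕ) (hp : p.Prime)
    (hext : ∀ q : ℚ, ‖(q : K)‖ = (padicNorm p q : ℝ))
    (f : K[X])
    (a : K) (s : ℝ) (hs : 0 < s)
    (m : ℕ) (hpm : ¬ (p : ℕ) ∣ m)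
    (hmto1 : ∀ w : K, (∃ z : K, ‖z - a‖ ≤ s ∧ f.eval z = w) →
      Multiset.card ((f - C w).roots.filter (fun z => ‖z - a‖ ≤ s)) = m) :
    Multiset.card (f.derivative.roots.filter (fun z => ‖z - a‖ ≤ s)) = m - 1 := by
  have : Fact p.Prime := ⟨hp⟩
  have norm_m : ‖(m : K)‖ = 1 := by
    rw [← Rat.cast_natCast, hext, (padicNorm.nat_eq_one_iff m).mpr hpm, Rat.cast_one]
  have fibre := hmto1 (f.eval a) ⟨a, by simpa using hs.le, rfl⟩
  have fibre_ne_zero : f - C (f.eval a) ≠ 0 := by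
    rintro h
    rw [h, roots_zero] at fibre
    exact hpm (by simp [← fibre])
  have hf' := ((isDominantIndex_comp_X_add_C_card_roots hna hs fibre_ne_zero a).derivative hna hs
    (fibre ▸ norm_m))
  rw [fibre, derivative_comp, derivative_sub, derivative_C, sub_zero, derivative_add,
    derivative_X, derivative_C, add_zero, one_mul] at hf'
  have hf'_ne_zero : derivative f ≠ 0 :=
    comp_X_add_C_ne_zero_iff.mp fun h => hf'.coeff_ne_zero hs (by rw [h, coeff_zero])
  exact (isDominantIndex_comp_X_add_C_card_roots hna hs hf'_ne_zero a).unique hf'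

/-- Let `f ∈ K[z]` have degree `d ≥ 1`, let `D = {z : |z - a| ≤ s}`
with `s > 0`, and let `m` be a positive integer with `p ∤ m`. If `f` maps `D`
exactly `m`-to-1 onto its image (for every `w ∈ f(D)`, `f(z) - w` has exactly `m`
roots in `D` counted with multiplicity), then `f'` has exactly `m - 1` roots in
`D`, counted with multiplicity. -/
theorem stmt_7 (K : Type*) [NormedField K] [IsAlgClosed K] [CompleteSpace K]
    (hna : IsNonarchimedean (fun x : K => ‖x‖))
    (p : ℕ) (hp : p.Prime)
    (hext : ∀ q : ℚ, ‖(q : K)‖ = (padicNorm p q : ℝ))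
    (f : K[X]) (d : ℕ) (hd : 1 ≤ d) (hdeg : f.natDegree = d)
    (a : K) (s : ℝ) (hs : 0 < s)
    (m : ℕ) (hm : 0 < m) (hpm : ¬ (p : ℕ) ∣ m)
    (hmto1 : ∀ w : K, (∃ z : K, ‖z - a‖ ≤ s ∧ f.eval z = w) →
      Multiset.card ((f - C w).roots.filter (fun z => ‖z - a‖ ≤ s)) = m) :
    Multiset.card (f.derivative.roots.filter (fun z => ‖z - a‖ ≤ s)) = m - 1 :=
  stmt_7_general K hna p hp hext f a s hs m hpm hmto1
end

section
/- Let p be a prime with p > d/2, let f ∈ P_d be post-critically bounded, and let c₁ be a critical point of f of maximal absolute value with |c₁| > 1. Then there exists a fixed point α of f (i.e. f(α) = α) with |c₁ − α| ≤ 1. -/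
/-!
Suppose every fixed point `α` of `f` satisfies `‖c₁ - α‖ > 1`. The fixed points are the roots
of `f - X`, among them `0`, so `‖f c₁ - c₁‖ = ∏_α ‖c₁ - α‖` is a product of at least two factors
`> 1`; it exceeds every single factor, in particular `‖c₁‖`. By the ultrametric inequality
`‖f c₁‖` then exceeds `1`, `‖c₁‖` and the norm of every fixed point. On that region `‖f z‖ = ‖z‖ ^ d`
with `d ≥ 2`, so the orbit of `c₁` escapes to infinity, contradicting post-critical boundedness.
-/

open Polynomial

theorem Multiset.lt_prod_of_mem_of_one_lt {s : Multiset ℝ} (hs : ∀ y ∈ s, 1 < y)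
    (hcard : 2 ≤ Multiset.card s) {x : ℝ} (hx : x ∈ s) : x < s.prod := by
  have hne : s.erase x ≠ 0 := by
    rw [← Multiset.card_pos, Multiset.card_erase_of_mem hx, Nat.pred_eq_sub_one]
    omega
  have hrest : 1 < (s.erase x).prod := by
    simpa using Multiset.prod_map_lt_prod_map hne (fun _ => 1) id (by simp)
      (fun y hy => hs y (Multiset.mem_of_mem_erase hy))
  have hx1 := hs x hx
  rw [← Multiset.cons_erase hx, Multiset.prod_cons]
  nlinarith

theorem exists_lt_norm_iterate_of_expanding {E : Type*} [Norm E] {φ : E → E} {z : E}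
    (hz : 1 < ‖z‖) (hφ : ∀ y, ‖z‖ ≤ ‖y‖ → ‖z‖ * ‖y‖ ≤ ‖φ y‖) (B : ℝ) :
    ∃ n, B < ‖φ^[n] z‖ := by
  have hpow : ∀ n, ‖z‖ ^ (n + 1) ≤ ‖φ^[n] z‖ := by
    intro n
    induction n with
    | zero => simp
    | succ n ih =>
      rw [Function.iterate_succ_apply', pow_succ']
      exact (mul_le_mul_of_nonneg_left ih (by positivity)).trans
        (hφ _ ((le_self_pow₀ hz.le n.succ_ne_zero).trans ih))
  obtain ⟨n, hn⟩ := pow_unbounded_of_one_lt B hz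
  exact ⟨n, hn.trans_le ((pow_le_pow_right₀ hz.le n.le_succ).trans (hpow n))⟩

namespace Polynomial

theorem two_le_natDegree_of_eval_derivative_eq_zero {R : Type*} [CommRing R] [Nontrivial R]
    {f : R[X]} (hf : f.Monic) (hf0 : f.eval 0 = 0) {c : R} (hc : f.derivative.eval c = 0) :
    2 ≤ f.natDegree := by
  by_contra! hlt
  interval_cases hd : f.natDegree
  · simp [hf.natDegree_eq_zero.mp hd] at hf0
  · rw [hf.eq_X_add_C hd] at hc
    simp at hc

theorem eval_eq_of_mem_roots_sub_X {R : Type*} [CommRing R] [IsDomain R] {f : R[X]} {a : R}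
    (ha : a ∈ (f - X).roots) : f.eval a = a := by
  simpa [sub_eq_zero] using (mem_roots'.mp ha).2

section NormedField

variable {K : Type*} [NormedField K]

theorem Splits.norm_eval_eq_prod_roots_of_monic {g : K[X]} (hs : g.Splits) (hm : g.Monic)
    (z : K) : ‖g.eval z‖ = (g.roots.map fun a => ‖z - a‖).prod := by
  rw [hs.eval_eq_prod_roots_of_monic hm, ← normHom_apply, map_multiset_prod, Multiset.map_map]
  rfl

variable [IsUltrametricDist K]

theorem Splits.norm_eval_eq_pow_of_forall_norm_lt {g : K[X]} (hs : g.Splits) (hm : g.Monic)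
    {z : K} (hz : ∀ a ∈ g.roots, ‖a‖ < ‖z‖) : ‖g.eval z‖ = ‖z‖ ^ g.natDegree := by
  have hfactor : ∀ a ∈ g.roots, ‖z - a‖ = ‖z‖ := fun a ha => by
    rw [sub_eq_add_neg,
      IsUltrametricDist.norm_add_eq_max_of_norm_ne_norm (by simpa using (hz a ha).ne'), norm_neg,
      max_eq_left (hz a ha).le]
  rw [hs.norm_eval_eq_prod_roots_of_monic hm, Multiset.map_congr rfl hfactor, Multiset.map_const',
    Multiset.prod_replicate, hs.natDegree_eq_card_roots]

variable [IsAlgClosed K] {f : K[X]}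

theorem norm_eval_eq_pow_of_forall_norm_fixedPoint_lt (hf : f.Monic) (hd : 2 ≤ f.natDegree)
    {z : K} (hz1 : 1 < ‖z‖) (hz : ∀ a, f.eval a = a → ‖a‖ < ‖z‖) :
    ‖f.eval z‖ = ‖z‖ ^ f.natDegree := by
  have hXf : (X : K[X]).natDegree < f.natDegree := by rw [natDegree_X]; omega
  have hg : ‖(f - X).eval z‖ = ‖z‖ ^ f.natDegree := by
    rw [← natDegree_sub_eq_left_of_natDegree_lt hXf]
    exact (IsAlgClosed.splits _).norm_eval_eq_pow_of_forall_norm_lt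
      (hf.sub_of_left (degree_lt_degree hXf)) fun a ha => hz a (eval_eq_of_mem_roots_sub_X ha)
  have hlt : ‖z‖ < ‖(f - X).eval z‖ := hg ▸ lt_self_pow₀ hz1 (by omega)
  calc ‖f.eval z‖ = ‖(f - X).eval z + z‖ := by simp
    _ = ‖(f - X).eval z‖ := by
      rw [IsUltrametricDist.norm_add_eq_max_of_norm_ne_norm hlt.ne', max_eq_left hlt.le]
    _ = ‖z‖ ^ f.natDegree := hg

theorem exists_lt_norm_iterate_of_forall_norm_fixedPoint_lt (hf : f.Monic)
    (hd : 2 ≤ f.natDegree) {z : K} (hz1 : 1 < ‖z‖) (hz : ∀ a, f.eval a = a → ‖a‖ < ‖z‖) (B : ℝ) :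
    ∃ n, B < ‖(fun x => f.eval x)^[n] z‖ := by
  refine exists_lt_norm_iterate_of_expanding hz1 (fun y hy => ?_) B
  have hy1 : 1 < ‖y‖ := hz1.trans_le hy
  rw [norm_eval_eq_pow_of_forall_norm_fixedPoint_lt hf hd hy1 fun a ha => (hz a ha).trans_le hy]
  calc ‖z‖ * ‖y‖ ≤ ‖y‖ ^ 2 := by rw [sq]; exact mul_le_mul_of_nonneg_right hy (norm_nonneg y)
    _ ≤ ‖y‖ ^ f.natDegree := pow_le_pow_right₀ hy1.le hd

theorem exists_lt_norm_iterate_of_forall_one_lt_norm_sub_fixedPoint (hf : f.Monic)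
    (hd : 2 ≤ f.natDegree) (hf0 : f.eval 0 = 0) {c : K} (hc : 1 < ‖c‖)
    (hfar : ∀ a, f.eval a = a → 1 < ‖c - a‖) (B : ℝ) :
    ∃ n, B < ‖(fun x => f.eval x)^[n] c‖ := by
  have hXf : (X : K[X]).natDegree < f.natDegree := by rw [natDegree_X]; omega
  set g := f - X
  have hgm : g.Monic := hf.sub_of_left (degree_lt_degree hXf)
  have hfactor : ∀ a ∈ g.roots, ‖c - a‖ < ‖g.eval c‖ := fun a ha => by
    rw [(IsAlgClosed.splits g).norm_eval_eq_prod_roots_of_monic hgm]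
    refine Multiset.lt_prod_of_mem_of_one_lt ?_ ?_ (Multiset.mem_map_of_mem _ ha)
    · simp only [Multiset.mem_map]
      rintro _ ⟨b, hb, rfl⟩
      exact hfar b (eval_eq_of_mem_roots_sub_X hb)
    · rw [Multiset.card_map, IsAlgClosed.card_roots_eq_natDegree,
        natDegree_sub_eq_left_of_natDegree_lt hXf]
      exact hd
  have hcg : ‖c‖ < ‖g.eval c‖ := by
    simpa using hfactor 0 (mem_roots'.mpr ⟨hgm.ne_zero, by simp [g, hf0]⟩)
  have himage : ‖f.eval c‖ = ‖g.eval c‖ := by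
    rw [show f.eval c = g.eval c + c by simp [g],
      IsUltrametricDist.norm_add_eq_max_of_norm_ne_norm hcg.ne', max_eq_left hcg.le]
  have hfixed : ∀ a, f.eval a = a → ‖a‖ < ‖f.eval c‖ := fun a ha => by
    have hroot : a ∈ g.roots := mem_roots'.mpr ⟨hgm.ne_zero, by simp [g, ha]⟩
    calc ‖a‖ = ‖(a - c) + c‖ := by rw [sub_add_cancel]
      _ ≤ max ‖c - a‖ ‖c‖ := norm_sub_rev c a ▸ IsUltrametricDist.norm_add_le_max _ _
      _ < ‖f.eval c‖ := himage ▸ max_lt (hfactor a hroot) hcg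
  obtain ⟨n, hn⟩ := exists_lt_norm_iterate_of_forall_norm_fixedPoint_lt hf hd
    (himage ▸ hc.trans hcg) hfixed B
  exact ⟨n + 1, by rwa [Function.iterate_succ_apply]⟩

end NormedField

end Polynomial

theorem stmt_10_general (K : Type*) [NormedField K] [IsAlgClosed K]
    (hna : IsNonarchimedean (fun x : K => ‖x‖))
    (f : K[X]) (hmonic : f.Monic) (hf0 : f.eval 0 = 0)
    (hPCB : ∀ c : K, f.derivative.eval c = 0 →
      ∃ B : ℝ, ∀ n : ℕ, ‖(fun z => f.eval z)^[n] c‖ ≤ B)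
    (c₁ : K) (hc₁ : f.derivative.eval c₁ = 0)
    (hbig : 1 < ‖c₁‖) :
    ∃ α : K, f.eval α = α ∧ ‖c₁ - α‖ ≤ 1 := by
  have : IsUltrametricDist K := IsUltrametricDist.isUltrametricDist_of_isNonarchimedean_norm hna
  by_contra! hfar
  obtain ⟨B, hB⟩ := hPCB c₁ hc₁
  obtain ⟨n, hn⟩ := exists_lt_norm_iterate_of_forall_one_lt_norm_sub_fixedPoint hmonic
    (two_le_natDegree_of_eval_derivative_eq_zero hmonic hf0 hc₁) hf0 hbig hfar B
  exact (hB n).not_gt hn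

/-- Let `p` be a prime with `p > d/2`, let `f ∈ P_d` be
post-critically bounded, and let `c₁` be a critical point of maximal absolute value
with `|c₁| > 1`. Then there is a fixed point `α` of `f` with `|c₁ - α| ≤ 1`. -/
theorem stmt_10 (K : Type*) [NormedField K] [IsAlgClosed K] [CompleteSpace K]
    (hna : IsNonarchimedean (fun x : K => ‖x‖))
    (p : ℕ) (hp : p.Prime)
    (hext : ∀ q : ℚ, ‖(q : K)‖ = (padicNorm p q : ℝ))
    (d : ℕ) (hdp : d < 2 * p)
    (f : K[X]) (hmonic : f.Monic) (hdeg : f.natDegree = d) (hf0 : f.eval 0 = 0)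
    (hPCB : ∀ c : K, f.derivative.eval c = 0 →
      ∃ B : ℝ, ∀ n : ℕ, ‖(fun z => f.eval z)^[n] c‖ ≤ B)
    (c₁ : K) (hc₁ : f.derivative.eval c₁ = 0)
    (hmax : ∀ c : K, f.derivative.eval c = 0 → ‖c‖ ≤ ‖c₁‖)
    (hbig : 1 < ‖c₁‖) :
    ∃ α : K, f.eval α = α ∧ ‖c₁ - α‖ ≤ 1 :=
  stmt_10_general K hna f hmonic hf0 hPCB c₁ hc₁ hbig
end

section
/- For each integer m ≥ 2, let t = 1 + 3·2^{2m+1} ∈ ℚ₂ and f_t(z) = z³ − (3/2) t z². Then the forward orbit of t under f_t is bounded; in particular f_t is post-critically bounded. -/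
/-!
Conjugating by `z ↦ 2z` turns `f_t` into `g(y) = y²(y - 3t)/4` and the critical orbit into the
orbit of `2t`. The map `g` has a repelling fixed point near `c = -1 + 117·2^(2m+1)` with
multiplier `≡ 9/4`, and `g(2t) ≡ c + 4^(m+1) (mod 2^(2m+5))`. Since `9 ≡ 1 (mod 8)`, each step
sends `c + 4^(k+1) + O(2^(2k+5))` to `c + 4^k + O(2^(2k+3))`, until the orbit reaches
`c + 4 ≡ 3t (mod 2^5)`, whose image lies in `8ℤ₂`; and `g` maps `8ℤ₂` into itself. So the
orbit stays in `ℤ₂`.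
-/

lemma four_pow_eq_two_pow {R : Type*} [Semiring R] (n : ℕ) : (4 : R) ^ n = 2 ^ (2 * n) := by
  rw [pow_mul]; norm_num

namespace Padic

variable {p : ℕ} [Fact p.Prime]

/-- `x ∈ p ^ j ℤ_[p]`: the valuation of `x` is at least `j` (always true for `x = 0`). -/
def ValGE (x : ℚ_[p]) (j : ℤ) : Prop := ‖x‖ ≤ (p : ℝ) ^ (-j)

namespace ValGE

variable {x y : ℚ_[p]} {i j : ℤ}

lemma mono (hx : ValGE x j) (h : i ≤ j) : ValGE x i :=
  hx.trans <| zpow_le_zpow_right₀ (mod_cast (Fact.out : p.Prime).one_le) (neg_le_neg h)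

lemma add (hx : ValGE x j) (hy : ValGE y j) : ValGE (x + y) j :=
  (IsUltrametricDist.norm_add_le_max x y).trans (max_le hx hy)

lemma neg (hx : ValGE x j) : ValGE (-x) j := by
  rwa [ValGE, norm_neg]

lemma sub (hx : ValGE x j) (hy : ValGE y j) : ValGE (x - y) j := by
  rw [sub_eq_add_neg]; exact hx.add hy.neg

lemma mul (hx : ValGE x i) (hy : ValGE y j) : ValGE (x * y) (i + j) := by
  have hp : (0 : ℝ) < p := mod_cast (Fact.out : p.Prime).pos
  rw [ValGE, norm_mul, neg_add, zpow_add₀ hp.ne']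
  exact mul_le_mul hx hy (norm_nonneg y) (zpow_nonneg hp.le _)

lemma pow (hx : ValGE x j) (n : ℕ) : ValGE (x ^ n) (n * j) := by
  induction n with
  | zero => simp [ValGE]
  | succ n ih => simpa [pow_succ, add_mul] using ih.mul hx

lemma div_prime_pow (hx : ValGE x j) (n : ℕ) : ValGE (x / (p : ℚ_[p]) ^ n) (j - n) := by
  have hp : (0 : ℝ) < p := mod_cast (Fact.out : p.Prime).pos
  unfold ValGE at hx ⊢
  rw [norm_div, norm_p_pow, div_le_iff₀ (zpow_pos hp _), ← zpow_add₀ hp.ne']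
  rwa [show -(j - n) + -(n : ℤ) = -j by ring]

end ValGE

lemma valGE_intCast (a : ℤ) : ValGE (a : ℚ_[p]) 0 := by
  simpa [ValGE] using norm_int_le_one a

lemma valGE_ofNat (n : ℕ) [n.AtLeastTwo] : ValGE (OfNat.ofNat n : ℚ_[p]) 0 := by
  simpa using valGE_intCast (p := p) (OfNat.ofNat n)

lemma valGE_one : ValGE (1 : ℚ_[p]) 0 := by
  simpa using valGE_intCast (p := p) 1

lemma valGE_prime_pow (n : ℕ) : ValGE ((p : ℚ_[p]) ^ n) n :=
  (norm_p_pow n).le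

lemma valGE_two_pow (n : ℕ) : ValGE ((2 : ℚ_[2]) ^ n) n := by
  simpa using valGE_prime_pow (p := 2) n

lemma valGE_four_pow (n : ℕ) : ValGE ((4 : ℚ_[2]) ^ n) (2 * n) := by
  rw [four_pow_eq_two_pow]; exact_mod_cast valGE_two_pow (2 * n)

lemma valGE_mul_two_pow {a : ℚ_[2]} (ha : ValGE a 0) {n : ℕ} {j : ℤ} (h : j ≤ n) :
    ValGE (a * 2 ^ n) j :=
  (by simpa using ha.mul (valGE_two_pow n) : ValGE (a * 2 ^ n) n).mono h

lemma ValGE.div_four {x : ℚ_[2]} {j : ℤ} (hx : ValGE x j) : ValGE (x / 4) (j - 2) := by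
  simpa [show (4 : ℚ_[2]) = 2 ^ 2 by norm_num] using hx.div_prime_pow 2

end Padic

open Padic

namespace CubicCriticalOrbit

noncomputable def cubic (t z : ℚ_[2]) : ℚ_[2] := z ^ 3 - 3 / 2 * t * z ^ 2

noncomputable def rescaledCubic (t y : ℚ_[2]) : ℚ_[2] := y ^ 2 * (y - 3 * t) / 4

lemma semiconj_two_mul_rescaledCubic (t : ℚ_[2]) :
    Function.Semiconj (2 * ·) (cubic t) (rescaledCubic t) := fun z => by
  simp only [cubic, rescaledCubic]; ring

lemma rescaledCubic_sub (t c y : ℚ_[2]) :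
    rescaledCubic t y - c = rescaledCubic t c - c +
      ((3 * c ^ 2 - 6 * t * c) * (y - c) + (3 * c - 3 * t) * (y - c) ^ 2 + (y - c) ^ 3) / 4 := by
  simp only [rescaledCubic]; ring

lemma valGE_rescaledCubic {t y : ℚ_[2]} {a b : ℤ} (hy : ValGE y a) (hyt : ValGE (y - 3 * t) b) :
    ValGE (rescaledCubic t y) (2 * a + b - 2) := by
  have h := ((hy.pow 2).mul hyt).div_four
  push_cast at h
  exact h

/-- One step away from a repelling near-fixed point `c`, in the shape of `rescaledCubic_sub`:
`δ = y - c` is the displacement, `e` the defect of `c` from being fixed, and `Q / 4 ≡ 1 / 4` the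
multiplier. -/
lemma valGE_step {e Q R δ : ℚ_[2]} {n : ℕ} (he : ValGE e (2 * n + 3)) (hQ : ValGE (Q - 1) 3)
    (hR : ValGE R 1) (hδ : ValGE (δ - 4 ^ (n + 1)) (2 * n + 5)) :
    ValGE (e + (Q * δ + R * δ ^ 2 + δ ^ 3) / 4 - 4 ^ n) (2 * n + 3) := by
  have hQ0 : ValGE Q 0 := by simpa using (hQ.mono (by norm_num)).add valGE_one
  have hδ0 : ValGE δ (2 * n + 2) := by
    simpa using (hδ.mono (by omega)).add ((valGE_four_pow (n + 1)).mono (by push_cast; omega))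
  have hsplit : e + (Q * δ + R * δ ^ 2 + δ ^ 3) / 4 - 4 ^ n =
      e + (Q - 1) * 4 ^ n + (Q * (δ - 4 ^ (n + 1)) + R * δ ^ 2 + δ ^ 3) / 4 := by ring
  rw [hsplit]
  refine (he.add ((hQ.mul (valGE_four_pow n)).mono (by omega))).add ?_
  have hnumerator : ValGE (Q * (δ - 4 ^ (n + 1)) + R * δ ^ 2 + δ ^ 3) (2 * n + 5) :=
    (((hQ0.mul hδ).mono (by omega)).add ((hR.mul (hδ0.pow 2)).mono (by push_cast; omega))).add
      ((hδ0.pow 3).mono (by push_cast; omega))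
  exact hnumerator.div_four.mono (by omega)

variable (m : ℕ)

noncomputable def t : ℚ_[2] := 1 + 3 * 2 ^ (2 * m + 1)

/-- Since `117 ≡ 9 / 5 (mod 2 ^ 6)`, this approximates the fixed point
`-1 + (9 / 5) 2 ^ (2m + 1) + O(2 ^ (4m + 2))` of `rescaledCubic (t m)`. -/
noncomputable def c : ℚ_[2] := -1 + 117 * 2 ^ (2 * m + 1)

lemma valGE_t : ValGE (t m) 0 :=
  valGE_one.add (valGE_mul_two_pow (valGE_ofNat 3) (by omega))

lemma valGE_c : ValGE (c m) 0 :=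
  valGE_one.neg.add (valGE_mul_two_pow (valGE_ofNat 117) (by omega))

lemma valGE_three_c_sub_three_t : ValGE (3 * c m - 3 * t m) 1 := by
  rw [show 3 * c m - 3 * t m = -(3 * 2 ^ 1) + 342 * 2 ^ (2 * m + 1) by simp only [t, c]; ring]
  exact (valGE_mul_two_pow (valGE_ofNat 3) le_rfl).neg.add
    (valGE_mul_two_pow (valGE_ofNat 342) (by omega))

variable {m}

lemma valGE_rescaledCubic_c_sub_c (hm : 2 ≤ m) :
    ValGE (rescaledCubic (t m) (c m) - c m) (2 * m + 5) := by
  rw [show rescaledCubic (t m) (c m) - c m =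
      9 * 2 ^ (2 * m + 5) - 20007 * 2 ^ (4 * m + 2) + 369603 * 2 ^ (6 * m + 3) by
    simp only [rescaledCubic, t, c]; ring]
  exact ((valGE_mul_two_pow (valGE_ofNat 9) (by omega)).sub
    (valGE_mul_two_pow (valGE_ofNat 20007) (by omega))).add
    (valGE_mul_two_pow (valGE_ofNat 369603) (by omega))

lemma valGE_multiplier_sub_one (hm : 1 ≤ m) :
    ValGE (3 * c m ^ 2 - 6 * t m * c m - 1) 3 := by
  rw [show 3 * c m ^ 2 - 6 * t m * c m - 1 =
      2 ^ 3 - 1386 * 2 ^ (2 * m + 1) + 38961 * 2 ^ (4 * m + 2) by simp only [t, c]; ring]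
  exact (((valGE_two_pow 3).mono (by omega)).sub
    (valGE_mul_two_pow (valGE_ofNat 1386) (by omega))).add
    (valGE_mul_two_pow (valGE_ofNat 38961) (by omega))

lemma valGE_c_add_four_sub_three_t (hm : 2 ≤ m) : ValGE (c m + 4 - 3 * t m) 5 := by
  rw [show c m + 4 - 3 * t m = 108 * 2 ^ (2 * m + 1) by simp only [t, c]; ring]
  exact valGE_mul_two_pow (valGE_ofNat 108) (by omega)

lemma valGE_rescaledCubic_two_t_sub (hm : 2 ≤ m) :
    ValGE (rescaledCubic (t m) (2 * t m) - c m - 4 ^ (m + 1)) (2 * m + 5) := by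
  rw [show rescaledCubic (t m) (2 * t m) - c m - 4 ^ (m + 1) =
      -(2 ^ (2 * m + 8)) - 27 * 2 ^ (4 * m + 2) - 27 * 2 ^ (6 * m + 3) by
    simp only [rescaledCubic, t, c, four_pow_eq_two_pow]; ring]
  exact (((valGE_two_pow _).mono (by omega)).neg.sub
    (valGE_mul_two_pow (valGE_ofNat 27) (by omega))).sub
    (valGE_mul_two_pow (valGE_ofNat 27) (by omega))

variable (m) in
def orbitRegion : Set ℚ_[2] :=
  {y | (∃ k ≤ m, ValGE (y - c m - 4 ^ (k + 1)) (2 * k + 5)) ∨ ValGE y 3}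

lemma valGE_of_mem_orbitRegion {y : ℚ_[2]} (hy : y ∈ orbitRegion m) : ValGE y 0 := by
  rcases hy with ⟨k, -, hk⟩ | hy
  · rw [show y = (y - c m - 4 ^ (k + 1)) + c m + 4 ^ (k + 1) by ring]
    exact ((hk.mono (by omega)).add (valGE_c m)).add ((valGE_four_pow (k + 1)).mono (by omega))
  · exact hy.mono (by norm_num)

lemma mapsTo_orbitRegion (hm : 2 ≤ m) :
    Set.MapsTo (rescaledCubic (t m)) (orbitRegion m) (orbitRegion m) := by
  intro y hy
  have hy0 := valGE_of_mem_orbitRegion hy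
  rcases hy with ⟨_ | k, hk, hyk⟩ | hy
  · right
    have hyt : ValGE (y - 3 * t m) 5 := by
      rw [show y - 3 * t m = (y - c m - 4 ^ 1) + (c m + 4 - 3 * t m) by ring]
      exact hyk.add (valGE_c_add_four_sub_three_t hm)
    simpa using valGE_rescaledCubic hy0 hyt
  · left
    refine ⟨k, by omega, ?_⟩
    have h := valGE_step (n := k + 1) ((valGE_rescaledCubic_c_sub_c hm).mono (by omega))
      (valGE_multiplier_sub_one (by omega : 1 ≤ m)) (valGE_three_c_sub_three_t m) (δ := y - c m)
      (hyk.mono (by push_cast; omega))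
    rw [rescaledCubic_sub (c := c m)]
    exact h.mono (by push_cast; omega)
  · right
    have hyt : ValGE (y - 3 * t m) 0 :=
      (hy.mono (by norm_num)).sub (by simpa using (valGE_ofNat 3).mul (valGE_t m))
    exact (valGE_rescaledCubic hy hyt).mono (by norm_num)

lemma valGE_iterate_rescaledCubic_two_t (hm : 2 ≤ m) (n : ℕ) :
    ValGE ((rescaledCubic (t m))^[n] (2 * t m)) 0 := by
  cases n with
  | zero => simpa using (valGE_ofNat 2).mul (valGE_t m)
  | succ n =>
    rw [Function.iterate_succ_apply]
    exact valGE_of_mem_orbitRegion <| (mapsTo_orbitRegion hm).iterate n <|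
      Or.inl ⟨m, le_rfl, valGE_rescaledCubic_two_t_sub hm⟩

end CubicCriticalOrbit

open CubicCriticalOrbit

/-- For each integer `m ≥ 2`, let `t = 1 + 3·2^(2m+1) ∈ ℚ₂` and
`f_t(z) = z³ - (3/2) t z²`. Then the forward orbit of `t` under `f_t` is bounded;
in particular `f_t` is post-critically bounded. -/
theorem stmt_12 (m : ℕ) (hm : 2 ≤ m) :
    ∃ B : ℝ, ∀ n : ℕ,
      ‖(fun z : ℚ_[2] =>
          z ^ 3 - (3 / 2 : ℚ_[2]) * (1 + 3 * 2 ^ (2 * m + 1)) * z ^ 2)^[n]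
        ((1 : ℚ_[2]) + 3 * 2 ^ (2 * m + 1))‖ ≤ B := by
  refine ⟨2, fun n => ?_⟩
  have h := valGE_iterate_rescaledCubic_two_t hm n
  rw [← (semiconj_two_mul_rescaledCubic (t m)).iterate_right n] at h
  show ‖(cubic (t m))^[n] (t m)‖ ≤ 2
  simpa [ValGE] using h.div_prime_pow 1
end

section
/- Let k ≥ 2 be an integer and let t ∈ K satisfy |t − (1 + 2^{2k})| ≤ 2^{−(2k+1)} (i.e. t ≡ 1 + 2^{2k} mod 2^{2k+1}). Then the forward orbit of t under f_t(z) = z³ − (3/2) t z² is unbounded; in particular f_t is not post-critically bounded. -/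
/-!
The point `-1/2` is a repelling fixed point of `f_1`, with multiplier `9/4` of absolute value `4`.
With `w = -2z - 1` and `s = t - 1`, one step of `f_t` sends `w` to `(9w + 3s)/4` up to an error of
size `|w| max(|w|, |s|)`, so while `|s| < |w| < 1` each step multiplies `|w|` by exactly `4`.
For `|s| = 2^(-2k)` the second iterate of the critical point `t` has `|w| = 2^(1-2k)` (the first
one only has `|w| = |s|`, too small to start the argument), so `k` steps later `|w| = 2` and
`|z| = 4`. Since `|t| = 1`, every `z` with `|z| > 2` has `|f_t z| = |z|^3`, and the orbit escapes.
-/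

open IsUltrametricDist

section Ultrametric
variable {K : Type*} [NormedField K] [IsUltrametricDist K]

lemma norm_add_eq_left_of_lt {x y : K} (h : ‖y‖ < ‖x‖) : ‖x + y‖ = ‖x‖ := by
  rw [norm_add_eq_max_of_norm_ne_norm h.ne', max_eq_left h.le]

lemma norm_eq_of_norm_sub_lt {x y : K} (h : ‖x - y‖ < ‖y‖) : ‖x‖ = ‖y‖ := by
  rw [← sub_add_cancel x y, add_comm, norm_add_eq_left_of_lt h]

lemma norm_add_le_of_le_of_le {x y : K} {c : ℝ} (hx : ‖x‖ ≤ c) (hy : ‖y‖ ≤ c) :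
    ‖x + y‖ ≤ c :=
  (norm_add_le_max x y).trans (max_le hx hy)

lemma norm_ofNat_mul_le (n : ℕ) [n.AtLeastTwo] (x : K) : ‖(ofNat(n) : K) * x‖ ≤ ‖x‖ := by
  rw [norm_mul]
  exact mul_le_of_le_one_left (norm_nonneg x) (by exact_mod_cast norm_natCast_le_one K n)

lemma norm_natCast_of_odd (h2 : ‖(2 : K)‖ < 1) {n : ℕ} (hn : Odd n) : ‖(n : K)‖ = 1 := by
  obtain ⟨m, rfl⟩ := hn
  have h : ‖(2 : K) * m‖ < ‖(1 : K)‖ := by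
    rw [norm_mul, norm_one]
    exact mul_lt_one_of_nonneg_of_lt_one_left (norm_nonneg _) h2 (norm_natCast_le_one K m)
  push_cast
  rw [add_comm, norm_add_eq_left_of_lt h, norm_one]

end Ultrametric

def cubicMap {K : Type*} [Field K] (t z : K) : K := z ^ 3 - (3 / 2 : K) * t * z ^ 2

/-- The displacement `z + 1/2` from the fixed point of `cubicMap 1`, rescaled by `-2` so that its
recursion has integer coefficients. -/
def dev {K : Type*} [Field K] (z : K) : K := -2 * z - 1

section Field
variable {K : Type*} [Field K]

lemma four_mul_dev_cubicMap (h2 : (2 : K) ≠ 0) (t z : K) :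
    4 * dev (cubicMap t z) = 9 * dev z + 3 * (t - 1) +
      dev z * (6 * dev z + dev z ^ 2 + 6 * (t - 1) + 3 * dev z * (t - 1)) := by
  simp only [dev, cubicMap]
  field_simp
  ring

lemma dev_cubicMap_self (h2 : (2 : K) ≠ 0) (t : K) :
    dev (cubicMap t t) = (t - 1) * (3 + 3 * (t - 1) + (t - 1) ^ 2) := by
  simp only [dev, cubicMap]
  field_simp
  ring

end Field

section NormTwo
variable {K : Type*} [NormedField K] (h2 : ‖(2 : K)‖ = 2⁻¹)
include h2

lemma two_ne_zero_of_norm : (2 : K) ≠ 0 := by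
  rw [← norm_ne_zero_iff, h2]; norm_num

lemma norm_four_of_norm_two : ‖(4 : K)‖ = 4⁻¹ := by
  rw [show (4 : K) = 2 * 2 by norm_num, norm_mul, h2]; norm_num

end NormTwo

section TwoAdic
variable {K : Type*} [NormedField K] [IsUltrametricDist K] (h2 : ‖(2 : K)‖ = 2⁻¹)
include h2

lemma norm_ofNat_of_odd (n : ℕ) [n.AtLeastTwo] (hn : Odd n) : ‖(ofNat(n) : K)‖ = 1 := by
  exact_mod_cast norm_natCast_of_odd (by rw [h2]; norm_num) hn

lemma norm_dev_cubicMap_eq {t z : K} {a : ℝ} (hw : ‖dev z‖ ≤ 1)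
    (hmain : ‖9 * dev z + 3 * (t - 1)‖ = a) (herr : ‖dev z‖ * max ‖dev z‖ ‖t - 1‖ < a) :
    ‖dev (cubicMap t z)‖ = 4 * a := by
  have hsplit : ‖4 * dev (cubicMap t z) - (9 * dev z + 3 * (t - 1))‖
      < ‖9 * dev z + 3 * (t - 1)‖ := by
    rw [four_mul_dev_cubicMap (two_ne_zero_of_norm h2), add_sub_cancel_left, norm_mul, hmain]
    refine lt_of_le_of_lt (mul_le_mul_of_nonneg_left ?_ (norm_nonneg _)) herr
    refine norm_add_le_of_le_of_le (norm_add_le_of_le_of_le (norm_add_le_of_le_of_le ?_ ?_) ?_) ?_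
    · exact (norm_ofNat_mul_le 6 _).trans (le_max_left _ _)
    · rw [norm_pow, sq]
      exact (mul_le_of_le_one_left (norm_nonneg _) hw).trans (le_max_left _ _)
    · exact (norm_ofNat_mul_le 6 _).trans (le_max_right _ _)
    · rw [mul_assoc]
      refine (norm_ofNat_mul_le 3 _).trans ?_
      rw [norm_mul]
      exact (mul_le_of_le_one_left (norm_nonneg _) hw).trans (le_max_right _ _)
  have h := norm_eq_of_norm_sub_lt hsplit
  rw [norm_mul, norm_four_of_norm_two h2, hmain] at h
  linarith

lemma norm_dev_cubicMap {t z : K} (hs : ‖t - 1‖ < ‖dev z‖) (hw : ‖dev z‖ < 1) :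
    ‖dev (cubicMap t z)‖ = 4 * ‖dev z‖ := by
  refine norm_dev_cubicMap_eq h2 hw.le ?_ ?_
  · have h9 : ‖9 * dev z‖ = ‖dev z‖ := by
      rw [norm_mul, norm_ofNat_of_odd h2 9 (by decide), one_mul]
    rw [norm_add_eq_left_of_lt (h9 ▸ (norm_ofNat_mul_le 3 _).trans_lt hs), h9]
  · rw [max_eq_left hs.le]
    exact mul_lt_of_lt_one_right ((norm_nonneg _).trans_lt hs) hw

lemma norm_dev_cubicMap_cubicMap_self {t : K} (ht : t ≠ 1) (hs : ‖t - 1‖ < 2⁻¹) :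
    ‖dev (cubicMap t (cubicMap t t))‖ = 2 * ‖t - 1‖ := by
  have hs0 : 0 < ‖t - 1‖ := norm_pos_iff.2 (sub_ne_zero.2 ht)
  have hs1 : ‖t - 1‖ ≤ 1 := hs.le.trans (by norm_num)
  have hw : ‖dev (cubicMap t t)‖ ≤ ‖t - 1‖ := by
    rw [dev_cubicMap_self (two_ne_zero_of_norm h2), norm_mul]
    refine mul_le_of_le_one_right (norm_nonneg _) (norm_add_le_of_le_of_le
      (norm_add_le_of_le_of_le ?_ ((norm_ofNat_mul_le 3 _).trans hs1)) ?_)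
    · exact_mod_cast norm_natCast_le_one K 3
    · rw [norm_pow]; exact pow_le_one₀ (norm_nonneg _) hs1
  have hsq : ‖t - 1‖ * ‖t - 1‖ < 2⁻¹ * ‖t - 1‖ := mul_lt_mul_of_pos_right hs hs0
  have h30 : ‖(30 : K) * (t - 1)‖ = 2⁻¹ * ‖t - 1‖ := by
    rw [show (30 : K) = 2 * 15 by norm_num, norm_mul, norm_mul, h2,
      norm_ofNat_of_odd h2 15 (by decide), mul_one]
  have hrest : ‖(t - 1) ^ 2 * (27 + 9 * (t - 1))‖ < 2⁻¹ * ‖t - 1‖ := by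
    rw [norm_mul, norm_pow, sq]
    refine lt_of_le_of_lt (mul_le_of_le_one_right (by positivity) ?_) hsq
    exact norm_add_le_of_le_of_le (by exact_mod_cast norm_natCast_le_one K 27)
      ((norm_ofNat_mul_le 9 _).trans hs1)
  have hmain : 9 * dev (cubicMap t t) + 3 * (t - 1)
      = 30 * (t - 1) + (t - 1) ^ 2 * (27 + 9 * (t - 1)) := by
    rw [dev_cubicMap_self (two_ne_zero_of_norm h2)]; ring
  have hnorm := norm_dev_cubicMap_eq h2 (t := t) (hw.trans hs1) (a := 2⁻¹ * ‖t - 1‖) ?_ ?_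
  · rw [hnorm]; ring
  · rw [hmain, norm_add_eq_left_of_lt (h30 ▸ hrest), h30]
  · calc ‖dev (cubicMap t t)‖ * max ‖dev (cubicMap t t)‖ ‖t - 1‖
        ≤ ‖t - 1‖ * ‖t - 1‖ := mul_le_mul hw (max_le hw le_rfl) (by positivity) (norm_nonneg _)
      _ < 2⁻¹ * ‖t - 1‖ := hsq

lemma norm_dev_iterate_cubicMap {t z : K} (hs : ‖t - 1‖ < ‖dev z‖) (n : ℕ)
    (hn : 4 ^ n * ‖dev z‖ < 4) : ‖dev ((cubicMap t)^[n] z)‖ = 4 ^ n * ‖dev z‖ := by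
  induction n with
  | zero => simp
  | succ n ih =>
    have hn' : 4 ^ n * ‖dev z‖ < 1 := by rw [pow_succ] at hn; linarith
    have hle : ‖dev z‖ ≤ 4 ^ n * ‖dev z‖ :=
      le_mul_of_one_le_left (norm_nonneg _) (one_le_pow₀ (by norm_num))
    have ih' := ih (hn'.trans (by norm_num))
    rw [Function.iterate_succ_apply', norm_dev_cubicMap h2 (ih' ▸ hs.trans_le hle) (ih' ▸ hn'),
      ih', pow_succ]
    ring

lemma norm_eq_two_mul_norm_dev {z : K} (h : 1 < ‖dev z‖) : ‖z‖ = 2 * ‖dev z‖ := by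
  have h1 : ‖-2 * z‖ = ‖dev z‖ := by
    rw [show -2 * z = dev z + 1 by simp [dev], norm_add_eq_left_of_lt (by rwa [norm_one])]
  rw [norm_mul, norm_neg, h2] at h1
  linarith

lemma norm_cubicMap_of_two_lt {t z : K} (ht : ‖t‖ = 1) (hz : 2 < ‖z‖) :
    ‖cubicMap t z‖ = ‖z‖ ^ 3 := by
  have h32 : ‖(3 / 2 : K)‖ = 2 := by
    rw [norm_div, norm_ofNat_of_odd h2 3 (by decide), h2]; norm_num
  rw [cubicMap, sub_eq_add_neg, norm_add_eq_left_of_lt, norm_pow]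
  rw [norm_neg, norm_mul, norm_mul, h32, ht, norm_pow, norm_pow, mul_one, pow_succ' _ 2]
  exact mul_lt_mul_of_pos_right hz (pow_pos (by linarith) 2)

lemma norm_iterate_cubicMap_of_two_lt {t z : K} (ht : ‖t‖ = 1) (hz : 2 < ‖z‖) (n : ℕ) :
    ‖(cubicMap t)^[n] z‖ = ‖z‖ ^ 3 ^ n := by
  induction n with
  | zero => simp
  | succ n ih =>
    have hgrow : ‖z‖ ≤ ‖z‖ ^ 3 ^ n := le_self_pow₀ (by linarith) (by positivity)
    rw [Function.iterate_succ_apply', norm_cubicMap_of_two_lt h2 ht (by linarith), ih, ← pow_mul,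
      pow_succ]

lemma not_bounded_iterate_cubicMap_of_two_lt {t z : K} (ht : ‖t‖ = 1) (hz : 2 < ‖z‖) :
    ¬ ∃ B : ℝ, ∀ n, ‖(cubicMap t)^[n] z‖ ≤ B := by
  rintro ⟨B, hB⟩
  obtain ⟨n, hn⟩ := pow_unbounded_of_one_lt B (show 1 < ‖z‖ by linarith)
  refine (hB n).not_gt (hn.trans_le ?_)
  rw [norm_iterate_cubicMap_of_two_lt h2 ht hz]
  exact pow_le_pow_right₀ (by linarith) (Nat.lt_pow_self (by norm_num)).le

lemma norm_sub_one_of_norm_sub_le {t : K} {k : ℕ}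
    (ht : ‖t - (1 + 2 ^ (2 * k))‖ ≤ (2 : ℝ) ^ (-(2 * (k : ℤ) + 1))) :
    ‖t - 1‖ = 2⁻¹ ^ (2 * k) := by
  have hpow : ‖(2 : K) ^ (2 * k)‖ = 2⁻¹ ^ (2 * k) := by rw [norm_pow, h2]
  rw [← hpow]
  refine norm_eq_of_norm_sub_lt ?_
  rw [show t - 1 - 2 ^ (2 * k) = t - (1 + 2 ^ (2 * k)) by ring, hpow]
  refine ht.trans_lt ?_
  rw [zpow_neg, ← inv_zpow, show 2 * (k : ℤ) + 1 = ((2 * k + 1 : ℕ) : ℤ) by push_cast; ring,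
    zpow_natCast]
  exact pow_lt_pow_right_of_lt_one₀ (by norm_num) (by norm_num) (by omega)

end TwoAdic

lemma norm_two_of_padicNorm {K : Type*} [NormedField K]
    (hext : ∀ q : ℚ, ‖(q : K)‖ = (padicNorm 2 q : ℝ)) : ‖(2 : K)‖ = 2⁻¹ := by
  have h := hext ((2 : ℕ) : ℚ)
  rw [padicNorm.padicNorm_p_of_prime] at h
  simpa using h

theorem stmt_13_general (K : Type*) [NormedField K]
    (hna : IsNonarchimedean (fun x : K => ‖x‖))
    (hext : ∀ q : ℚ, ‖(q : K)‖ = (padicNorm 2 q : ℝ))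
    (k : ℕ) (hk : 2 ≤ k)
    (t : K) (ht : ‖t - (1 + 2 ^ (2 * k))‖ ≤ (2 : ℝ) ^ (-(2 * (k : ℤ) + 1))) :
    ¬ ∃ B : ℝ, ∀ n : ℕ,
      ‖(fun z : K => z ^ 3 - (3 / 2 : K) * t * z ^ 2)^[n] t‖ ≤ B := by
  have := IsUltrametricDist.isUltrametricDist_of_isNonarchimedean_norm hna
  have h2 := norm_two_of_padicNorm hext
  have hs := norm_sub_one_of_norm_sub_le h2 ht
  have hs0 : 0 < ‖t - 1‖ := hs ▸ by positivity
  have hs_half : ‖t - 1‖ < 2⁻¹ := by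
    rw [hs]; exact pow_lt_self_of_lt_one₀ (by norm_num) (by norm_num) (by omega)
  have ht1 : ‖t‖ = 1 := by
    rw [← norm_one (α := K)]
    exact norm_eq_of_norm_sub_lt (by rw [norm_one]; linarith)
  have hw : ‖dev ((cubicMap t)^[2] t)‖ = 2 * ‖t - 1‖ :=
    norm_dev_cubicMap_cubicMap_self h2 (sub_ne_zero.1 (norm_pos_iff.1 hs0)) hs_half
  have hwk : ‖dev ((cubicMap t)^[k] ((cubicMap t)^[2] t))‖ = 2 := by
    have hgrowth : 4 ^ k * ‖dev ((cubicMap t)^[2] t)‖ = 2 := by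
      rw [hw, hs, pow_mul, ← mul_assoc, mul_comm _ 2, mul_assoc, ← mul_pow]; norm_num
    rw [norm_dev_iterate_cubicMap h2 (by rw [hw]; linarith) k (by rw [hgrowth]; norm_num), hgrowth]
  have hz : 2 < ‖(cubicMap t)^[k] ((cubicMap t)^[2] t)‖ := by
    rw [norm_eq_two_mul_norm_dev h2 (by rw [hwk]; norm_num), hwk]; norm_num
  rintro ⟨B, hB⟩
  refine not_bounded_iterate_cubicMap_of_two_lt h2 ht1 hz ⟨B, fun n => ?_⟩
  rw [← Function.iterate_add_apply, ← Function.iterate_add_apply]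
  exact hB _

/-- Let `k ≥ 2` and `t ∈ K` with `|t - (1 + 2^(2k))| ≤ 2^(-(2k+1))`.
Then the forward orbit of `t` under `f_t(z) = z³ - (3/2) t z²` is unbounded; in
particular `f_t` is not post-critically bounded. -/
theorem stmt_13 (K : Type*) [NormedField K] [IsAlgClosed K] [CompleteSpace K]
    (hna : IsNonarchimedean (fun x : K => ‖x‖))
    (hext : ∀ q : ℚ, ‖(q : K)‖ = (padicNorm 2 q : ℝ))
    (k : ℕ) (hk : 2 ≤ k)
    (t : K) (ht : ‖t - (1 + 2 ^ (2 * k))‖ ≤ (2 : ℝ) ^ (-(2 * (k : ℤ) + 1))) :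
    ¬ ∃ B : ℝ, ∀ n : ℕ,
      ‖(fun z : K => z ^ 3 - (3 / 2 : K) * t * z ^ 2)^[n] t‖ ≤ B :=
  stmt_13_general K hna hext k hk t ht
end

section
/- Let m ≥ 2 be an integer and let t ∈ K satisfy |t − (1 + 3·2^{2m+1})| ≤ 2^{−(2m+3)} (i.e. t ≡ 1 + 3·2^{2m+1} mod 2^{2m+3}). Then the forward orbit of t under f_t(z) = z³ − (3/2) t z² is bounded; in particular f_t is post-critically bounded. -/
/-!
Write `t = 1 + τ`. The point `-1/2` is fixed by `f₁` with multiplier `9/4`, of absolute value `4`.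
To first order in `τ`, `fₜⁿ(t) + 1/2 ≈ aₙ τ` where `aₙ = 3/10 - (4/5)(9/4)ⁿ` solves the linearised
recursion `aₙ₊₁ = (9/4) aₙ - 3/8`, `a₁ = -3/2`; up to time `m + 2` the error stays smaller than
the bound `|aₙ τ| ≤ 2^(2n-2m-3)` by a factor `8`. At time `m + 2` the congruence on `t` gives
`a_{m+2} · 3 · 2^(2m+1) ≡ 1/2` up to `1/4`, because `9^(m+2) ≡ 1 mod 8`, so `|fₜ^(m+2)(t)| ≤ 1/2`.
The disc `|z| ≤ 1/2` is forward invariant, since `fₜ(z) = z²(z - 3t/2)` and `|z - 3t/2| ≤ 2`.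
-/

open IsUltrametricDist Set Filter Metric

namespace PCBCubic

section Ultrametric

lemma norm_add_le_two_zpow {E : Type*} [SeminormedAddGroup E] [IsUltrametricDist E]
    {x y : E} {a b c : ℤ} (hx : ‖x‖ ≤ (2 : ℝ) ^ a) (hy : ‖y‖ ≤ (2 : ℝ) ^ b)
    (ha : a ≤ c) (hb : b ≤ c) : ‖x + y‖ ≤ (2 : ℝ) ^ c :=
  (norm_add_le_max x y).trans <| max_le (hx.trans <| zpow_le_zpow_right₀ one_le_two ha)
    (hy.trans <| zpow_le_zpow_right₀ one_le_two hb)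

lemma norm_sub_le_two_zpow {E : Type*} [SeminormedAddGroup E] [IsUltrametricDist E]
    {x y : E} {a b c : ℤ} (hx : ‖x‖ ≤ (2 : ℝ) ^ a) (hy : ‖y‖ ≤ (2 : ℝ) ^ b)
    (ha : a ≤ c) (hb : b ≤ c) : ‖x - y‖ ≤ (2 : ℝ) ^ c := by
  rw [sub_eq_add_neg]
  exact norm_add_le_two_zpow hx (by rwa [norm_neg]) ha hb

lemma norm_mul_le_two_zpow {R : Type*} [SeminormedRing R] {x y : R} {a b : ℤ}
    (hx : ‖x‖ ≤ (2 : ℝ) ^ a) (hy : ‖y‖ ≤ (2 : ℝ) ^ b) : ‖x * y‖ ≤ (2 : ℝ) ^ (a + b) := by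
  rw [zpow_add₀ two_ne_zero]
  exact (norm_mul_le x y).trans (mul_le_mul hx hy (norm_nonneg y) (by positivity))

lemma norm_pow_le_two_zpow {R : Type*} [NormedDivisionRing R] {x : R} {a : ℤ}
    (hx : ‖x‖ ≤ (2 : ℝ) ^ a) (k : ℕ) : ‖x ^ k‖ ≤ (2 : ℝ) ^ (k * a) := by
  rw [norm_pow, mul_comm, zpow_mul, zpow_natCast]
  exact pow_le_pow_left₀ (norm_nonneg x) hx k

variable {R : Type*} [SeminormedRing R] [NormOneClass R] [IsUltrametricDist R]

lemma norm_three_le_two_zpow_zero : ‖(3 : R)‖ ≤ (2 : ℝ) ^ (0 : ℤ) := by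
  simpa using norm_natCast_le_one R 3

lemma norm_le_one_of_norm_sub_one_le_one {x : R} (hx : ‖x - 1‖ ≤ 1) : ‖x‖ ≤ 1 := by
  simpa using (norm_add_one_le_max_norm_one (x - 1)).trans (max_le hx le_rfl)

end Ultrametric

def ExtendsTwoAdic (K : Type*) [NormedField K] : Prop :=
  ∀ q : ℚ, ‖(q : K)‖ = padicNorm 2 q

section TwoAdic

variable {K : Type*} [NormedField K]

lemma ExtendsTwoAdic.charZero (hK : ExtendsTwoAdic K) : CharZero K :=
  charZero_of_inj_zero fun n hn => by
    have h := hK n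
    rw [Rat.cast_natCast, hn, norm_zero] at h
    exact_mod_cast padicNorm.zero_of_padicNorm_eq_zero (p := 2) (q := n)
      (by exact_mod_cast h.symm)

lemma ExtendsTwoAdic.norm_two (hK : ExtendsTwoAdic K) : ‖(2 : K)‖ = (2 : ℝ) ^ (-1 : ℤ) := by
  have h := hK 2
  rw [Rat.cast_ofNat, show (2 : ℚ) = ((2 : ℕ) : ℚ) by norm_num,
    padicNorm.padicNorm_p_of_prime] at h
  simpa using h

lemma ExtendsTwoAdic.norm_natCast_of_odd (hK : ExtendsTwoAdic K) {k : ℕ} (hk : Odd k) :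
    ‖(k : K)‖ = 1 := by
  rw [← Rat.cast_natCast, hK,
    (padicNorm.nat_eq_one_iff k).2 (Nat.two_dvd_ne_zero.2 (Nat.odd_iff.1 hk))]
  simp

lemma ExtendsTwoAdic.norm_neg_half_le (hK : ExtendsTwoAdic K) :
    ‖-(1 / 2 : K)‖ ≤ (2 : ℝ) ^ (1 : ℤ) := by
  rw [norm_neg, norm_div, hK.norm_two]; simp

lemma ExtendsTwoAdic.norm_two_zpow_mul_intCast_div_le [IsUltrametricDist K]
    (hK : ExtendsTwoAdic K) (j k : ℤ) {l : ℕ} (hl : Odd l) :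
    ‖(2 ^ j * k / l : K)‖ ≤ (2 : ℝ) ^ (-j) := by
  rw [norm_div, norm_mul, norm_zpow, hK.norm_two, hK.norm_natCast_of_odd hl, div_one, ← zpow_mul]
  simpa using mul_le_of_le_one_right (by positivity) (norm_intCast_le_one K k)

end TwoAdic

section Algebra

variable {K : Type*} [Field K]

def cubic (t z : K) : K := z ^ 3 - 3 / 2 * t * z ^ 2

def linCoeff (K : Type*) [Field K] (n : ℕ) : K := 3 / 10 - 4 / 5 * (9 / 4) ^ n

def nonlinearPart (τ w : K) : K := w ^ 2 * (w - 3) + 3 / 2 * τ * w * (1 - w)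

def orbitError (t : K) (n : ℕ) : K := (cubic t)^[n] t + 1 / 2 - linCoeff K n * (t - 1)

lemma iterate_add_half_eq (t : K) (n : ℕ) :
    (cubic t)^[n] t + 1 / 2 = orbitError t n + linCoeff K n * (t - 1) := by
  rw [orbitError]; ring

variable [CharZero K]

lemma orbitError_succ (t : K) (n : ℕ) :
    orbitError t (n + 1) =
      9 / 4 * orbitError t n + nonlinearPart (t - 1) ((cubic t)^[n] t + 1 / 2) := by
  simp only [orbitError, nonlinearPart, linCoeff, Function.iterate_succ_apply', cubic, pow_succ]
  ring

lemma orbitError_one (t : K) : orbitError t 1 = -(1 / 2) * (t - 1) ^ 2 * (t - 1 + 3) := by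
  simp only [orbitError, linCoeff, Function.iterate_one, cubic]
  ring

lemma iterate_one_add_half (t : K) :
    (cubic t)^[1] t + 1 / 2 = -(1 / 2) * (t - 1) * ((t - 1) ^ 2 + 3 * (t - 1) + 3) := by
  simp only [Function.iterate_one, cubic]
  ring

lemma linCoeff_mul_sub_half (m : ℕ) :
    linCoeff K (m + 2) * (3 * 2 ^ (2 * m + 1)) - 1 / 2 =
      ((9 * 2 ^ (2 * m + 1) - 3 * 9 ^ (m + 2) - 5 : ℤ) : K) / 10 := by
  rw [linCoeff, show (9 / 4 : K) = 9 / 2 ^ 2 by norm_num, div_pow, ← pow_mul]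
  push_cast
  field_simp
  ring

end Algebra

lemma eight_dvd_nine_mul_two_pow_sub (m : ℕ) (hm : 1 ≤ m) :
    (8 : ℤ) ∣ 9 * 2 ^ (2 * m + 1) - 3 * 9 ^ (m + 2) - 5 := by
  have h9 : 9 ^ (m + 2) ≡ 1 [ZMOD 8] := by
    simpa using (show (9 : ℤ) ≡ 1 [ZMOD 8] by decide).pow (m + 2)
  have h2 : 2 ^ (2 * m + 1) ≡ 0 [ZMOD 8] := Int.modEq_zero_iff_dvd.2 <| by
    rw [show 2 * m + 1 = 3 + (2 * m - 2) by omega, pow_add]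
    exact dvd_mul_right _ _
  have h := ((h2.mul_left 9).sub (h9.mul_left 3)).sub_right 5
  exact Int.modEq_zero_iff_dvd.1 (h.trans (by decide))

section Estimates

variable {K : Type*} [NormedField K] [IsUltrametricDist K] [CharZero K]

lemma ExtendsTwoAdic.norm_three_div_two_le (hK : ExtendsTwoAdic K) :
    ‖(3 / 2 : K)‖ ≤ (2 : ℝ) ^ (1 : ℤ) := by
  convert hK.norm_two_zpow_mul_intCast_div_le (-1) 3 odd_one using 2 <;> norm_num

lemma ExtendsTwoAdic.norm_nine_div_four_le (hK : ExtendsTwoAdic K) :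
    ‖(9 / 4 : K)‖ ≤ (2 : ℝ) ^ (2 : ℤ) := by
  convert hK.norm_two_zpow_mul_intCast_div_le (-2) 9 odd_one using 2 <;> norm_num

lemma ExtendsTwoAdic.norm_linCoeff_le (hK : ExtendsTwoAdic K) {n : ℕ} (hn : 2 ≤ n) :
    ‖linCoeff K n‖ ≤ (2 : ℝ) ^ (2 * (n : ℤ) - 2) := by
  have h310 : ‖(3 / 10 : K)‖ ≤ (2 : ℝ) ^ (1 : ℤ) := by
    convert hK.norm_two_zpow_mul_intCast_div_le (-1) 3 (l := 5) (by decide) using 2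
    norm_num
    ring
  have h45 : ‖(4 / 5 : K)‖ ≤ (2 : ℝ) ^ (-2 : ℤ) := by
    convert hK.norm_two_zpow_mul_intCast_div_le 2 1 (l := 5) (by decide) using 2
    norm_num
  exact norm_sub_le_two_zpow h310
    (norm_mul_le_two_zpow h45 (norm_pow_le_two_zpow hK.norm_nine_div_four_le n))
    (by omega) (by omega)

lemma ExtendsTwoAdic.norm_linCoeff_mul_sub_half_le (hK : ExtendsTwoAdic K) {m : ℕ}
    (hm : 1 ≤ m) :
    ‖linCoeff K (m + 2) * (3 * 2 ^ (2 * m + 1)) - 1 / 2‖ ≤ (2 : ℝ) ^ (-2 : ℤ) := by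
  obtain ⟨M, hM⟩ := eight_dvd_nine_mul_two_pow_sub m hm
  rw [linCoeff_mul_sub_half, hM]
  convert hK.norm_two_zpow_mul_intCast_div_le 2 M (l := 5) (by decide) using 2
  push_cast
  ring

lemma ExtendsTwoAdic.norm_nonlinearPart_le (hK : ExtendsTwoAdic K) {τ w : K} {c d e : ℤ}
    (hw : ‖w‖ ≤ (2 : ℝ) ^ c) (hc : c ≤ 0) (hτ : ‖τ‖ ≤ (2 : ℝ) ^ d)
    (hce : 2 * c ≤ e) (hde : 1 + d + c ≤ e) : ‖nonlinearPart τ w‖ ≤ (2 : ℝ) ^ e := by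
  have h1 : ‖(1 : K)‖ ≤ (2 : ℝ) ^ (0 : ℤ) := by simp
  exact norm_add_le_two_zpow
    (norm_mul_le_two_zpow (norm_pow_le_two_zpow hw 2)
      (norm_sub_le_two_zpow hw norm_three_le_two_zpow_zero hc le_rfl))
    (norm_mul_le_two_zpow
      (norm_mul_le_two_zpow (norm_mul_le_two_zpow hK.norm_three_div_two_le hτ) hw)
      (norm_sub_le_two_zpow h1 hw le_rfl hc))
    (by omega) (by omega)

lemma ExtendsTwoAdic.norm_orbitError_succ_le (hK : ExtendsTwoAdic K) {t : K} {n : ℕ}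
    {a c d e : ℤ} (hE : ‖orbitError t n‖ ≤ (2 : ℝ) ^ a)
    (hw : ‖(cubic t)^[n] t + 1 / 2‖ ≤ (2 : ℝ) ^ c) (hc : c ≤ 0) (hτ : ‖t - 1‖ ≤ (2 : ℝ) ^ d)
    (hae : a + 2 ≤ e) (hce : 2 * c ≤ e) (hde : 1 + d + c ≤ e) :
    ‖orbitError t (n + 1)‖ ≤ (2 : ℝ) ^ e := by
  rw [orbitError_succ]
  exact norm_add_le_two_zpow (norm_mul_le_two_zpow hK.norm_nine_div_four_le hE)
    (hK.norm_nonlinearPart_le hw hc hτ hce hde) (by omega) le_rfl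

lemma ExtendsTwoAdic.norm_orbitError_one_le (hK : ExtendsTwoAdic K) {t : K} {d : ℤ}
    (hτ : ‖t - 1‖ ≤ (2 : ℝ) ^ d) (hd : d ≤ 0) : ‖orbitError t 1‖ ≤ (2 : ℝ) ^ (1 + 2 * d) := by
  rw [orbitError_one]
  exact (norm_mul_le_two_zpow
    (norm_mul_le_two_zpow hK.norm_neg_half_le (norm_pow_le_two_zpow hτ 2))
    (norm_add_le_two_zpow hτ norm_three_le_two_zpow_zero hd le_rfl)).trans
    (zpow_le_zpow_right₀ one_le_two (by omega))

lemma ExtendsTwoAdic.norm_iterate_one_add_half_le (hK : ExtendsTwoAdic K) {t : K} {d : ℤ}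
    (hτ : ‖t - 1‖ ≤ (2 : ℝ) ^ d) (hd : d ≤ 0) :
    ‖(cubic t)^[1] t + 1 / 2‖ ≤ (2 : ℝ) ^ (1 + d) := by
  have hquad : ‖(t - 1) ^ 2 + 3 * (t - 1) + 3‖ ≤ (2 : ℝ) ^ (0 : ℤ) :=
    norm_add_le_two_zpow (norm_add_le_two_zpow (norm_pow_le_two_zpow hτ 2)
      (norm_mul_le_two_zpow norm_three_le_two_zpow_zero hτ) (by omega) (by omega))
      norm_three_le_two_zpow_zero le_rfl le_rfl
  rw [iterate_one_add_half]
  exact (norm_mul_le_two_zpow (norm_mul_le_two_zpow hK.norm_neg_half_le hτ) hquad).trans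
    (zpow_le_zpow_right₀ one_le_two (by omega))

lemma ExtendsTwoAdic.norm_orbitError_le (hK : ExtendsTwoAdic K) {m : ℕ} (hm : 2 ≤ m) {t : K}
    (hτ : ‖t - 1‖ ≤ (2 : ℝ) ^ (-(2 * (m : ℤ) + 1))) {n : ℕ} (hn : 2 ≤ n) (hnm : n ≤ m + 2) :
    ‖orbitError t n‖ ≤ (2 : ℝ) ^ (2 * (n : ℤ) - 2 * m - 6) := by
  induction n, hn using Nat.le_induction with
  | base =>
    -- The first iterate is bounded by hand: `‖linCoeff K 1‖ = 2` misses the bound `2^(2n-2)`.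
    exact hK.norm_orbitError_succ_le (hK.norm_orbitError_one_le hτ (by omega))
      (hK.norm_iterate_one_add_half_le hτ (by omega)) (by omega) hτ
      (by omega) (by omega) (by omega)
  | succ n hn ih =>
    have hE := ih (by omega)
    have hw : ‖(cubic t)^[n] t + 1 / 2‖ ≤ (2 : ℝ) ^ (2 * (n : ℤ) - 2 * m - 3) := by
      rw [iterate_add_half_eq]
      exact norm_add_le_two_zpow hE (norm_mul_le_two_zpow (hK.norm_linCoeff_le hn) hτ)
        (by omega) (by omega)
    exact hK.norm_orbitError_succ_le hE hw (by omega) hτ (by omega) (by omega) (by omega)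

lemma ExtendsTwoAdic.norm_sub_one_le (hK : ExtendsTwoAdic K) {m : ℕ} {t : K}
    (ht : ‖t - (1 + 3 * 2 ^ (2 * m + 1))‖ ≤ (2 : ℝ) ^ (-(2 * (m : ℤ) + 3))) :
    ‖t - 1‖ ≤ (2 : ℝ) ^ (-(2 * (m : ℤ) + 1)) := by
  have h : ‖(3 * 2 ^ (2 * m + 1) : K)‖ ≤ (2 : ℝ) ^ (-(2 * (m : ℤ) + 1)) := by
    convert hK.norm_two_zpow_mul_intCast_div_le (2 * m + 1) 3 odd_one using 2
    rw [show 2 * (m : ℤ) + 1 = ((2 * m + 1 : ℕ) : ℤ) by push_cast; ring, zpow_natCast]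
    push_cast
    ring
  rw [show t - 1 = t - (1 + 3 * 2 ^ (2 * m + 1)) + 3 * 2 ^ (2 * m + 1) by ring]
  exact norm_add_le_two_zpow ht h (by omega) le_rfl

lemma ExtendsTwoAdic.norm_iterate_le_half (hK : ExtendsTwoAdic K) {m : ℕ} (hm : 2 ≤ m) {t : K}
    (ht : ‖t - (1 + 3 * 2 ^ (2 * m + 1))‖ ≤ (2 : ℝ) ^ (-(2 * (m : ℤ) + 3))) :
    ‖(cubic t)^[m + 2] t‖ ≤ (2 : ℝ) ^ (-1 : ℤ) := by
  have hsplit : (cubic t)^[m + 2] t = orbitError t (m + 2) +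
      linCoeff K (m + 2) * (t - (1 + 3 * 2 ^ (2 * m + 1))) +
      (linCoeff K (m + 2) * (3 * 2 ^ (2 * m + 1)) - 1 / 2) := by
    linear_combination iterate_add_half_eq t (m + 2)
  rw [hsplit]
  refine norm_add_le_two_zpow (norm_add_le_two_zpow
    (hK.norm_orbitError_le hm (hK.norm_sub_one_le ht) (by omega) le_rfl)
    (norm_mul_le_two_zpow (hK.norm_linCoeff_le (by omega)) ht) ?_ ?_)
    (hK.norm_linCoeff_mul_sub_half_le (by omega)) le_rfl (by omega) <;> push_cast <;> omega

lemma ExtendsTwoAdic.mapsTo_cubic_closedBall (hK : ExtendsTwoAdic K) {t : K}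
    (ht : ‖t‖ ≤ 1) :
    MapsTo (cubic t) (closedBall 0 ((2 : ℝ) ^ (-1 : ℤ))) (closedBall 0 ((2 : ℝ) ^ (-1 : ℤ))) := by
  intro z hz
  rw [mem_closedBall_zero_iff] at hz ⊢
  have ht' : ‖t‖ ≤ (2 : ℝ) ^ (0 : ℤ) := by simpa using ht
  rw [show cubic t z = z ^ 2 * (z - 3 / 2 * t) by rw [cubic]; ring]
  exact norm_mul_le_two_zpow (norm_pow_le_two_zpow hz 2)
    (norm_sub_le_two_zpow hz (norm_mul_le_two_zpow hK.norm_three_div_two_le ht') (by omega) le_rfl)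

end Estimates

lemma exists_norm_iterate_le_of_mapsTo_closedBall {E : Type*} [SeminormedAddGroup E] {f : E → E}
    {r : ℝ} (hf : MapsTo f (closedBall 0 r) (closedBall 0 r)) {x : E} {N : ℕ}
    (hx : f^[N] x ∈ closedBall 0 r) : ∃ B, ∀ n, ‖f^[n] x‖ ≤ B := by
  have hev : ∀ᶠ n in atTop, ‖f^[n] x‖ ≤ r := eventually_atTop.2 ⟨N, fun n hn => by
    rw [← Nat.sub_add_cancel hn, Function.iterate_add_apply, ← mem_closedBall_zero_iff]
    exact hf.iterate _ hx⟩
  obtain ⟨B, hB⟩ := (isBoundedUnder_of_eventually_le hev).bddAbove_range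
  exact ⟨B, fun n => hB ⟨n, rfl⟩⟩

end PCBCubic

theorem stmt_14_general (K : Type*) [NormedField K]
    (hna : IsNonarchimedean (fun x : K => ‖x‖))
    (hext : ∀ q : ℚ, ‖(q : K)‖ = (padicNorm 2 q : ℝ))
    (m : ℕ) (hm : 2 ≤ m)
    (t : K) (ht : ‖t - (1 + 3 * 2 ^ (2 * m + 1))‖ ≤ (2 : ℝ) ^ (-(2 * (m : ℤ) + 3))) :
    ∃ B : ℝ, ∀ n : ℕ,
      ‖(fun z : K => z ^ 3 - (3 / 2 : K) * t * z ^ 2)^[n] t‖ ≤ B := by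
  have hK : PCBCubic.ExtendsTwoAdic K := hext
  have := IsUltrametricDist.isUltrametricDist_of_isNonarchimedean_norm hna
  have := hK.charZero
  have ht1 : ‖t‖ ≤ 1 := PCBCubic.norm_le_one_of_norm_sub_one_le_one <|
    (hK.norm_sub_one_le ht).trans (zpow_le_one_of_nonpos₀ one_le_two (by omega))
  exact PCBCubic.exists_norm_iterate_le_of_mapsTo_closedBall (hK.mapsTo_cubic_closedBall ht1)
    (mem_closedBall_zero_iff.2 (hK.norm_iterate_le_half hm ht))

/-- Let `m ≥ 2` and `t ∈ K` with
`|t - (1 + 3·2^(2m+1))| ≤ 2^(-(2m+3))`. Then the forward orbit of `t` under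
`f_t(z) = z³ - (3/2) t z²` is bounded; in particular `f_t` is post-critically
bounded. -/
theorem stmt_14 (K : Type*) [NormedField K] [IsAlgClosed K] [CompleteSpace K]
    (hna : IsNonarchimedean (fun x : K => ‖x‖))
    (hext : ∀ q : ℚ, ‖(q : K)‖ = (padicNorm 2 q : ℝ))
    (m : ℕ) (hm : 2 ≤ m)
    (t : K) (ht : ‖t - (1 + 3 * 2 ^ (2 * m + 1))‖ ≤ (2 : ℝ) ^ (-(2 * (m : ℤ) + 3))) :
    ∃ B : ℝ, ∀ n : ℕ,
      ‖(fun z : K => z ^ 3 - (3 / 2 : K) * t * z ^ 2)^[n] t‖ ≤ B :=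
  stmt_14_general K hna hext m hm t ht
end
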